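/- arXiv:1303.1248 — 4 statements merged into one kernel-verified Lean document; each statement's English description precedes it below -/
import Mathlib

section
/- Fix t ∈ [0,T], a state i ∈ {0,1} with j = 1−i, and suppose g(·,i) : [0,T] → (0,∞) is differentiable at t and ḡ(t,j) ∈ ℝ is given. Define, for x > 0, v(t,x,i) = g(t,i)·x^γ/γ, v̄(t,x,j) = ḡ(t,j)·x^γ/γ, F₁(t,x,i) = μ(t,i)·x/(σ(t,i)²·(1−γ)), F₂(t,x,i) = g(t,i)^{1/(γ−1)}·x, and U(x) = x^γ/γ. Then the equation ∂v/∂t(t,x,i) + (r(t,i)x + μ(t,i)F₁(t,x,i) − F₂(t,x,i))·∂v/∂x(t,x,i) + (σ(t,i)²F₁(t,x,i)²/2)·∂²v/∂x²(t,x,i) + U(F₂(t,x,i)) + λ_{ii}·v(t,x,i) − ρ_i·v(t,x,i) + λ_{ij}·v̄(t,x,j) = 0 holds for all x > 0 if and only if g'(t,i) + (β(t,i) − ρ_i + λ_{ii})·g(t,i) + (1−γ)·g(t,i)^{γ/(γ−1)} + λ_{ij}·ḡ(t,j) = 0. -/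
/-! Under the ansatz every term of the HJB equation is a multiple of `x ^ γ`: the value function,
its time derivative and the utility of consumption directly, and the terms with `∂ₓv ∝ x ^ (γ - 1)`
and `∂ₓₓv ∝ x ^ (γ - 2)` because they are multiplied by `x` and `x ^ 2`. The equation therefore
factors as `x ^ γ / γ` times the ODE residual, and since `x ^ γ / γ ≠ 0` it holds for all `x > 0`
exactly when the residual vanishes. -/

lemma deriv_mul_rpow_div_self (c : ℝ) {γ : ℝ} (hγ : γ ≠ 0) (x : ℝ) :
    deriv (fun y : ℝ => c * y ^ γ / γ) x = c * x ^ (γ - 1) := by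
  simp_rw [mul_div_right_comm c]
  rw [deriv_const_mul_field, Real.deriv_rpow_const]
  field_simp

lemma deriv_deriv_mul_rpow_div_self (c : ℝ) {γ : ℝ} (hγ : γ ≠ 0) (x : ℝ) :
    deriv (deriv (fun y : ℝ => c * y ^ γ / γ)) x = c * (γ - 1) * x ^ (γ - 2) := by
  rw [funext (deriv_mul_rpow_div_self c hγ), deriv_const_mul_field, Real.deriv_rpow_const]
  ring_nf

lemma rpow_one_div_sub_one_mul_self {a : ℝ} (ha : a ≠ 0) {γ : ℝ} (hγ : γ ≠ 1) :
    a ^ (1 / (γ - 1)) * a = a ^ (γ / (γ - 1)) := by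
  rw [← Real.rpow_add_one ha]
  congr 1
  field_simp [sub_ne_zero.mpr hγ]
  ring

-- At `σ = 0` this still holds: every `μ`-term on either side is `0` by `x / 0 = 0`.
lemma hjb_residual_eq_mul_ode_residual {γ r μ σ ρi lam gbarj t x : ℝ} (g : ℝ → ℝ)
    (hγ : γ ≠ 1) (hγ0 : γ ≠ 0) (hg : 0 < g t) (hx : 0 < x) :
    deriv (fun τ => g τ * x ^ γ / γ) t
        + (r * x + μ * (μ * x / (σ ^ 2 * (1 - γ))) - g t ^ (1 / (γ - 1)) * x)
            * deriv (fun y => g t * y ^ γ / γ) x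
        + (σ ^ 2 * (μ * x / (σ ^ 2 * (1 - γ))) ^ 2 / 2)
            * deriv (deriv (fun y => g t * y ^ γ / γ)) x
        + (g t ^ (1 / (γ - 1)) * x) ^ γ / γ
        + (-lam) * (g t * x ^ γ / γ) - ρi * (g t * x ^ γ / γ)
        + lam * (gbarj * x ^ γ / γ)
      = x ^ γ / γ *
        (deriv g t + (γ * r + γ * μ ^ 2 / (2 * σ ^ 2 * (1 - γ)) - ρi - lam) * g t
          + (1 - γ) * g t ^ (γ / (γ - 1)) + lam * gbarj) := by
  have time_deriv : deriv (fun τ => g τ * x ^ γ / γ) t = deriv g t * (x ^ γ / γ) := by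
    simp_rw [mul_div_assoc]
    exact deriv_mul_const_field _
  have consumption : (g t ^ (1 / (γ - 1)) * x) ^ γ = g t ^ (γ / (γ - 1)) * x ^ γ := by
    rw [Real.mul_rpow (by positivity) hx.le, ← Real.rpow_mul hg.le]
    congr 2
    ring
  have consumption_rate : g t ^ (1 / (γ - 1)) = g t ^ (γ / (γ - 1)) / g t :=
    eq_div_of_mul_eq hg.ne' (rpow_one_div_sub_one_mul_self hg.ne' hγ)
  have pow_sub_two : x ^ (γ - 2) = x ^ γ / x ^ 2 := by
    rw [← Real.rpow_natCast, ← Real.rpow_sub hx]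
    norm_num
  rw [time_deriv, deriv_mul_rpow_div_self _ hγ0, deriv_deriv_mul_rpow_div_self _ hγ0,
    consumption, consumption_rate, pow_sub_two, Real.rpow_sub_one hx.ne']
  field_simp
  ring

theorem stmt_5_general (T γ t r μ σ ρi lam gbarj : ℝ)
    (hγ : γ < 1) (hγ0 : γ ≠ 0) (ht : t ∈ Set.Icc 0 T)
    (g : ℝ → ℝ) (hgpos : ∀ s ∈ Set.Icc 0 T, 0 < g s) :
    (∀ x : ℝ, 0 < x →
        deriv (fun τ => g τ * x ^ γ / γ) t
          + (r * x + μ * (μ * x / (σ ^ 2 * (1 - γ))) - g t ^ (1 / (γ - 1)) * x)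
              * deriv (fun y => g t * y ^ γ / γ) x
          + (σ ^ 2 * (μ * x / (σ ^ 2 * (1 - γ))) ^ 2 / 2)
              * deriv (deriv (fun y => g t * y ^ γ / γ)) x
          + (g t ^ (1 / (γ - 1)) * x) ^ γ / γ
          + (-lam) * (g t * x ^ γ / γ) - ρi * (g t * x ^ γ / γ)
          + lam * (gbarj * x ^ γ / γ) = 0) ↔
      deriv g t + (γ * r + γ * μ ^ 2 / (2 * σ ^ 2 * (1 - γ)) - ρi - lam) * g t
          + (1 - γ) * g t ^ (γ / (γ - 1)) + lam * gbarj = 0 := by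
  have factor := fun x (hx : 0 < x) =>
    hjb_residual_eq_mul_ode_residual (r := r) (μ := μ) (σ := σ) (ρi := ρi) (lam := lam)
      (gbarj := gbarj) g hγ.ne hγ0 (hgpos t ht) hx
  constructor
  · intro hjb
    have at_one := hjb 1 one_pos
    rw [factor 1 one_pos, Real.one_rpow, one_div, mul_eq_zero] at at_one
    exact at_one.resolve_left (inv_ne_zero hγ0)
  · intro ode x hx
    rw [factor x hx, ode, mul_zero]

/-- CRRA ansatz reduction: fix `t ∈ [0,T]` and a regime `i` (with `j = 1−i`); with
`v(t,x,i) = g(t,i)·x^γ/γ`, `v̄(t,x,j) = ḡ(t,j)·x^γ/γ`,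
`F₁(t,x,i) = μ·x/(σ²(1−γ))`, `F₂(t,x,i) = g(t,i)^{1/(γ−1)}·x`, `U(x) = x^γ/γ`, the extended
HJB equation holds for all `x > 0` iff the coefficient `g(·,i)` satisfies
`g' + (β − ρ_i + λ_{ii})g + (1−γ)g^{γ/(γ−1)} + λ_{ij}ḡ(t,j) = 0`, where
`β = γr + γμ²/(2σ²(1−γ))` and `λ_{ii} = −λ_{ij} = −lam`.
Here `r, μ, σ, ρi` are the (fixed) values of the market coefficients and discount rate at
`(t,i)`, `gbarj = ḡ(t,j)`, and `g : ℝ → ℝ` stands for `g(·,i)`. -/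
theorem stmt_5 (T γ t r μ σ ρi lam gbarj : ℝ)
    (hT : 0 < T) (hγ : γ < 1) (hγ0 : γ ≠ 0) (ht : t ∈ Set.Icc 0 T)
    (hσ : 0 < σ) (hlam : 0 ≤ lam)
    (g : ℝ → ℝ) (hgpos : ∀ s ∈ Set.Icc 0 T, 0 < g s)
    (hgdiff : DifferentiableAt ℝ g t) :
    (∀ x : ℝ, 0 < x →
        deriv (fun τ => g τ * x ^ γ / γ) t
          + (r * x + μ * (μ * x / (σ ^ 2 * (1 - γ))) - g t ^ (1 / (γ - 1)) * x)
              * deriv (fun y => g t * y ^ γ / γ) x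
          + (σ ^ 2 * (μ * x / (σ ^ 2 * (1 - γ))) ^ 2 / 2)
              * deriv (deriv (fun y => g t * y ^ γ / γ)) x
          + (g t ^ (1 / (γ - 1)) * x) ^ γ / γ
          + (-lam) * (g t * x ^ γ / γ) - ρi * (g t * x ^ γ / γ)
          + lam * (gbarj * x ^ γ / γ) = 0) ↔
      deriv g t + (γ * r + γ * μ ^ 2 / (2 * σ ^ 2 * (1 - γ)) - ρi - lam) * g t
          + (1 - γ) * g t ^ (γ / (γ - 1)) + lam * gbarj = 0 :=
  stmt_5_general T γ t r μ σ ρi lam gbarj hγ hγ0 ht g hgpos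
end

section
/- Let ρ > 0 be a single discount rate. There exists a unique continuously differentiable function ĝ : [0,T] × {0,1} → ℝ satisfying, for every i ∈ {0,1} with j = 1−i and every t ∈ [0,T], ĝ'(t,i) + (β(t,i) − ρ + λ_{ii})·ĝ(t,i) + (1−γ)·ĝ(t,i)^{γ/(γ−1)} + λ_{ij}·ĝ(t,j) = 0, with terminal conditions ĝ(T,i) = 1. Moreover there exist constants 0 < m ≤ M < ∞ with m ≤ ĝ(t,i) ≤ M for all t ∈ [0,T] and i ∈ {0,1}. -/
/-- The coefficient `β(t,i) = γ r(t,i) + γ μ(t,i)²/(2σ(t,i)²(1−γ))`. -/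
noncomputable def betaFn (γ : ℝ) (r μ σ : ℝ → Fin 2 → ℝ) : ℝ → Fin 2 → ℝ :=
  fun t i => γ * r t i + γ * (μ t i) ^ 2 / (2 * (σ t i) ^ 2 * (1 - γ))

/-- `ĝ` is a continuously differentiable solution on `[0,T]` of the pre-commitment
ODE system with constant discount rate `ρ` (regime set `{0,1}`, `j = 1 − i`,
`λ_{ij} = lam i`, `λ_{ii} = −lam i`), with terminal conditions `ĝ(T,i) = 1`. -/
def IsPrecommitSol (T γ ρ : ℝ) (β : ℝ → Fin 2 → ℝ) (lam : Fin 2 → ℝ)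
    (g : ℝ → Fin 2 → ℝ) : Prop :=
  (∀ i : Fin 2, ContDiffOn ℝ 1 (fun t => g t i) (Set.Icc 0 T)) ∧
  (∀ i : Fin 2, ∀ t ∈ Set.Icc 0 T,
      derivWithin (fun s => g s i) (Set.Icc 0 T) t
          + (β t i - ρ - lam i) * g t i
          + (1 - γ) * g t i ^ (γ / (γ - 1)) + lam i * g t (1 - i) = 0) ∧
  (∀ i : Fin 2, g T i = 1)

/-!
Reversing time, `u(s) = ĝ(T - s)` solves a forward system `u' = F(s, u)`, `u(0) = 1`, with
`F(s, x)_i = α_i x_i + c x_i ^ q + λ_ij x_j`, where `α_i = β(T - s, i) - ρ - λ_ij`, `c = 1 - γ > 0`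
and `q = γ/(γ - 1) < 1`, so `x ↦ x ^ q` is Lipschitz only away from `0`. Clamping `x` to `[a, b]` makes the field bounded and globally
Lipschitz, and Picard–Lindelöf solves the clamped system on all of `[0, T]`. If `a ≤ 1` is so small
that `K a < c a ^ q`, where `K` bounds `α` and `λ`, the field points inwards on every face
`{x_i = a}`, so the solution stays above `a`; Grönwall bounds it by a constant `M` that does not
depend on `b`, so for `b > M` the clamp is inactive and we have a genuine solution with values in
`[a, M]`. Any other solution agrees with it as long as it stays in `{x > a/2}`, where the field is
Lipschitz, and by continuity it cannot leave that region while the two agree.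
-/

open Set Filter Topology
open scoped NNReal

lemma abs_rpow_sub_rpow_le {a q x y : ℝ} (ha : 0 < a) (hq : q ≤ 1) (hx : a ≤ x) (hy : a ≤ y) :
    |x ^ q - y ^ q| ≤ |q| * a ^ (q - 1) * |x - y| := by
  have hderiv : ∀ z ∈ Ici a, HasDerivWithinAt (· ^ q) (q * z ^ (q - 1)) (Ici a) z := fun z hz =>
    (Real.hasDerivAt_rpow_const (Or.inl (ha.trans_le hz).ne')).hasDerivWithinAt
  have hbound : ∀ z ∈ Ici a, ‖q * z ^ (q - 1)‖ ≤ |q| * a ^ (q - 1) := fun z hz => by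
    rw [Real.norm_eq_abs, abs_mul, abs_of_pos (Real.rpow_pos_of_pos (ha.trans_le hz) _)]
    exact mul_le_mul_of_nonneg_left (Real.rpow_le_rpow_of_nonpos ha hz (by linarith))
      (abs_nonneg q)
  simpa only [Real.norm_eq_abs] using
    (convex_Ici a).norm_image_sub_le_of_norm_hasDerivWithin_le hderiv hbound hy hx

lemma rpow_le_rpow_add_one_add {a q y : ℝ} (ha : 0 < a) (hay : a ≤ y) (hq : q ≤ 1) :
    y ^ q ≤ a ^ q + 1 + y := by
  have hy : 0 < y := ha.trans_le hay
  have haq : 0 < a ^ q := Real.rpow_pos_of_pos ha q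
  rcases le_or_gt q 0 with hq0 | hq0
  · linarith [Real.rpow_le_rpow_of_nonpos ha hay hq0]
  rcases le_total y 1 with hy1 | hy1
  · linarith [Real.rpow_le_one hy.le hy1 hq0.le]
  · linarith [Real.rpow_le_self_of_one_le hy1 hq]

lemma exists_mul_lt_mul_rpow {K c q : ℝ} (hK : 0 ≤ K) (hc : 0 < c) (hq : q < 1) :
    ∃ a, 0 < a ∧ a ≤ 1 ∧ K * a < c * a ^ q := by
  have hp : 0 < 1 - q := by linarith
  have hcK : 0 < c / (K + 1) := by positivity
  set a := min 1 ((c / (K + 1)) ^ (1 / (1 - q)))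
  have ha : 0 < a := lt_min one_pos (Real.rpow_pos_of_pos hcK _)
  have hsmall : a ^ (1 - q) ≤ c / (K + 1) :=
    (Real.rpow_le_rpow ha.le (min_le_right _ _) hp.le).trans_eq <| by
      rw [← Real.rpow_mul hcK.le, one_div_mul_cancel hp.ne', Real.rpow_one]
  have hsplit : a = a ^ (1 - q) * a ^ q := by
    rw [← Real.rpow_add ha, sub_add_cancel, Real.rpow_one]
  refine ⟨a, ha, min_le_left _ _, ?_⟩
  have haq : 0 < a ^ q := Real.rpow_pos_of_pos ha q
  have hKc : K * (c / (K + 1)) < c := by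
    rw [mul_div_assoc', div_lt_iff₀ (by linarith)]; nlinarith
  calc K * a = K * a ^ (1 - q) * a ^ q := by rw [mul_assoc, ← hsplit]
    _ ≤ K * (c / (K + 1)) * a ^ q := by gcongr
    _ < c * a ^ q := by gcongr

lemma abs_apply_le_of_norm_le {ι : Type*} [Fintype ι] {y : ι → ℝ} {K : ℝ} (h : ‖y‖ ≤ K)
    (i : ι) : |y i| ≤ K :=
  (Real.norm_eq_abs (y i) ▸ norm_le_pi_norm y i).trans h

section Clamp

variable {ι : Type*} {a b : ℝ} {x : ι → ℝ}

noncomputable def clampVec (a b : ℝ) (x : ι → ℝ) : ι → ℝ := fun k => max a (min b (x k))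

lemma le_clampVec (k : ι) : a ≤ clampVec a b x k := le_max_left _ _

lemma clampVec_apply_of_le (hab : a ≤ b) {k : ι} (h : x k ≤ a) : clampVec a b x k = a := by
  rw [clampVec, min_eq_right (h.trans hab), max_eq_left h]

lemma clampVec_eq_self (h : ∀ k, x k ∈ Icc a b) : clampVec a b x = x :=
  funext fun k => by rw [clampVec, min_eq_right (h k).2, max_eq_right (h k).1]

lemma norm_clampVec_le [Fintype ι] (ha : 0 ≤ a) (hab : a ≤ b) : ‖clampVec a b x‖ ≤ b :=
  (pi_norm_le_iff_of_nonneg (ha.trans hab)).mpr fun k => by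
    rw [Real.norm_eq_abs, abs_of_nonneg (ha.trans (le_clampVec k))]
    exact max_le hab (min_le_left _ _)

lemma norm_clampVec_le_add [Fintype ι] (ha : 0 ≤ a) : ‖clampVec a b x‖ ≤ a + ‖x‖ :=
  (pi_norm_le_iff_of_nonneg (by positivity)).mpr fun k => by
    rw [Real.norm_eq_abs, abs_of_nonneg (ha.trans (le_clampVec k))]
    have hxk : |x k| ≤ ‖x‖ := abs_apply_le_of_norm_le le_rfl k
    exact max_le (by linarith [abs_nonneg (x k)])
      ((min_le_right _ _).trans (by linarith [le_abs_self (x k)]))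

lemma lipschitzWith_clampVec [Fintype ι] (a b : ℝ) : LipschitzWith 1 (clampVec (ι := ι) a b) :=
  LipschitzWith.of_edist_le fun x y => edist_pi_le_iff.mpr fun k =>
    (((LipschitzWith.id.const_min b).const_max a).edist_le_mul (x k) (y k)).trans <| by
      rw [ENNReal.coe_one, one_mul]; exact edist_le_pi_edist x y k

end Clamp

section ODE

variable {E : Type*} [NormedAddCommGroup E] [NormedSpace ℝ E]

theorem exists_forall_mem_Icc_hasDerivWithinAt_of_lipschitzWith [CompleteSpace E]
    {f : ℝ → E → E} {t₀ T C : ℝ} {K : ℝ≥0} (hT : t₀ ≤ T)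
    (hlip : ∀ t ∈ Icc t₀ T, LipschitzWith K (f t))
    (hcont : ∀ x, ContinuousOn (f · x) (Icc t₀ T))
    (hbound : ∀ t ∈ Icc t₀ T, ∀ x, ‖f t x‖ ≤ C) (x₀ : E) :
    ∃ u : ℝ → E, u t₀ = x₀ ∧ ∀ t ∈ Icc t₀ T, HasDerivWithinAt u (f t (u t)) (Icc t₀ T) t := by
  have hpl : IsPicardLindelof f (⟨t₀, left_mem_Icc.mpr hT⟩ : Icc t₀ T) x₀
      (C.toNNReal * (T - t₀).toNNReal) 0 C.toNNReal K :=
    { lipschitzOnWith := fun t ht => (hlip t ht).lipschitzOnWith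
      continuousOn := fun x _ => hcont x
      norm_le := fun t ht x _ => (hbound t ht x).trans (Real.le_coe_toNNReal C)
      mul_max_le := by
        simp [max_eq_left (sub_nonneg.mpr hT), Real.coe_toNNReal _ (sub_nonneg.mpr hT)] }
  exact hpl.exists_eq_forall_mem_Icc_hasDerivWithinAt₀

/-- The second solution cannot leave `U` before it stops agreeing with the first one. -/
theorem ODE_solution_unique_of_isOpen {v : ℝ → E → E} {U : Set E} {K : ℝ≥0} {f g : ℝ → E}
    {a b : ℝ} (hU : IsOpen U) (hv : ∀ t ∈ Ico a b, LipschitzOnWith K (v t) U)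
    (hf : ∀ t ∈ Icc a b, HasDerivWithinAt f (v t (f t)) (Icc a b) t)
    (hfU : ∀ t ∈ Ico a b, f t ∈ U)
    (hg : ∀ t ∈ Icc a b, HasDerivWithinAt g (v t (g t)) (Icc a b) t)
    (ha : f a = g a) : EqOn f g (Icc a b) := by
  have hfc : ContinuousOn f (Icc a b) := fun t ht => (hf t ht).continuousWithinAt
  have hgc : ContinuousOn g (Icc a b) := fun t ht => (hg t ht).continuousWithinAt
  have hclosed : IsClosed ({t | f t = g t} ∩ Icc a b) := by
    rw [inter_comm]; exact isClosed_Icc.isClosed_eq hfc hgc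
  refine fun t ht => hclosed.Icc_subset_of_forall_mem_nhdsWithin ha ?_ ht
  rintro x ⟨hxeq, hx⟩
  have hIcc := Icc_mem_nhdsGE_of_mem hx
  have hnear : Ico x b ∩ (f ⁻¹' U ∩ g ⁻¹' U) ∈ 𝓝[≥] x :=
    inter_mem (Ico_mem_nhdsGE hx.2) <| inter_mem
      (((hfc x (Ico_subset_Icc_self hx)).mono_of_mem_nhdsWithin hIcc).preimage_mem_nhdsWithin
        (hU.mem_nhds (hfU x hx)))
      (((hgc x (Ico_subset_Icc_self hx)).mono_of_mem_nhdsWithin hIcc).preimage_mem_nhdsWithin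
        (hU.mem_nhds (hxeq ▸ hfU x hx)))
  obtain ⟨z, hxz, hsub⟩ := mem_nhdsGE_iff_exists_Ico_subset.mp hnear
  filter_upwards [Ioo_mem_nhdsGT hxz] with y hy
  have hmem : ∀ t ∈ Ico x y, t ∈ Ico a b ∧ f t ∈ U ∧ g t ∈ U := fun t ht =>
    have h := hsub ⟨ht.1, ht.2.trans hy.2⟩
    ⟨⟨hx.1.trans h.1.1, h.1.2⟩, h.2⟩
  have hsub' : Icc x y ⊆ Icc a b := fun t ht =>
    ⟨hx.1.trans ht.1, (ht.2.trans_lt (hsub ⟨hy.1.le, hy.2⟩).1.2).le⟩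
  have hIci : ∀ {h : ℝ → E}, (∀ t ∈ Icc a b, HasDerivWithinAt h (v t (h t)) (Icc a b) t) →
      ∀ t ∈ Ico x y, HasDerivWithinAt h (v t (h t)) (Ici t) t := fun hh t ht =>
    (hh t (Ico_subset_Icc_self (hmem t ht).1)).mono_of_mem_nhdsWithin
      (Icc_mem_nhdsGE_of_mem (hmem t ht).1)
  exact ODE_solution_unique_of_mem_Icc_right (s := fun _ => U) (fun t ht => hv t (hmem t ht).1)
    (hfc.mono hsub') (hIci hf) (fun t ht => (hmem t ht).2.1)
    (hgc.mono hsub') (hIci hg) (fun t ht => (hmem t ht).2.2) hxeq ⟨hy.1.le, le_rfl⟩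

end ODE

section RegimeField

variable {β : ℝ → Fin 2 → ℝ} {c q K a t : ℝ} {lam : Fin 2 → ℝ} {x : Fin 2 → ℝ}

noncomputable def regimeField (β : ℝ → Fin 2 → ℝ) (c q : ℝ) (lam : Fin 2 → ℝ) (t : ℝ)
    (x : Fin 2 → ℝ) : Fin 2 → ℝ :=
  fun i => β t i * x i + c * x i ^ q + lam i * x (1 - i)

lemma lipschitzOnWith_regimeField (ha : 0 < a) (hq : q ≤ 1) (hc : 0 ≤ c) (hβ : ‖β t‖ ≤ K)
    (hlam : ‖lam‖ ≤ K) :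
    LipschitzOnWith (2 * K + c * (|q| * a ^ (q - 1))).toNNReal (regimeField β c q lam t)
      {x | ∀ k, a ≤ x k} := by
  have hK : 0 ≤ K := (norm_nonneg _).trans hlam
  have hL : 0 ≤ 2 * K + c * (|q| * a ^ (q - 1)) := by positivity
  refine LipschitzOnWith.of_dist_le_mul fun x hx y hy => ?_
  rw [Real.coe_toNNReal _ hL, dist_pi_le_iff (by positivity)]
  intro i
  have hd : ∀ k, |x k - y k| ≤ dist x y := fun k => by
    simpa only [Real.dist_eq] using dist_le_pi_dist x y k
  have hpow := abs_rpow_sub_rpow_le ha hq (hx i) (hy i)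
  calc dist (regimeField β c q lam t x i) (regimeField β c q lam t y i)
      = |β t i * (x i - y i) + c * (x i ^ q - y i ^ q) + lam i * (x (1 - i) - y (1 - i))| := by
        rw [Real.dist_eq, regimeField, regimeField]; ring_nf
    _ ≤ |β t i| * |x i - y i| + c * |x i ^ q - y i ^ q| + |lam i| * |x (1 - i) - y (1 - i)| := by
        refine (abs_add_three _ _ _).trans_eq ?_
        rw [abs_mul, abs_mul, abs_mul, abs_of_nonneg hc]
    _ ≤ K * dist x y + c * (|q| * a ^ (q - 1) * dist x y) + K * dist x y := by
        gcongr
        exacts [abs_apply_le_of_norm_le hβ i, hd i, hpow.trans (by gcongr; exact hd i),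
          abs_apply_le_of_norm_le hlam i, hd _]
    _ = (2 * K + c * (|q| * a ^ (q - 1))) * dist x y := by ring

lemma norm_regimeField_le (ha : 0 < a) (hq : q ≤ 1) (hc : 0 ≤ c) (hβ : ‖β t‖ ≤ K)
    (hlam : ‖lam‖ ≤ K) (hx : ∀ k, a ≤ x k) :
    ‖regimeField β c q lam t x‖ ≤ (2 * K + c) * ‖x‖ + c * (a ^ q + 1) := by
  have hK : 0 ≤ K := (norm_nonneg _).trans hlam
  have haq : 0 < a ^ q := Real.rpow_pos_of_pos ha q
  refine (pi_norm_le_iff_of_nonneg (by positivity)).mpr fun i => ?_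
  have hxk : ∀ k, |x k| ≤ ‖x‖ := abs_apply_le_of_norm_le le_rfl
  have hpow : |x i ^ q| ≤ a ^ q + 1 + ‖x‖ := by
    rw [abs_of_pos (Real.rpow_pos_of_pos (ha.trans_le (hx i)) q)]
    linarith [rpow_le_rpow_add_one_add ha (hx i) hq, le_abs_self (x i), hxk i]
  calc ‖regimeField β c q lam t x i‖
      ≤ |β t i| * |x i| + c * |x i ^ q| + |lam i| * |x (1 - i)| := by
        refine (abs_add_three _ _ _).trans_eq ?_
        rw [abs_mul, abs_mul, abs_mul, abs_of_nonneg hc]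
    _ ≤ K * ‖x‖ + c * (a ^ q + 1 + ‖x‖) + K * ‖x‖ := by
        gcongr
        exacts [abs_apply_le_of_norm_le hβ i, hxk i, abs_apply_le_of_norm_le hlam i, hxk _]
    _ = (2 * K + c) * ‖x‖ + c * (a ^ q + 1) := by ring

lemma regimeField_pos (ha : 0 < a) (hβ : ‖β t‖ ≤ K) (hlam : ∀ i, 0 ≤ lam i)
    (hKa : K * a < c * a ^ q) (hx : ∀ k, a ≤ x k) {i : Fin 2} (hxi : x i = a) :
    0 < regimeField β c q lam t x i := by
  have hβi : -K ≤ β t i := neg_le_of_abs_le (abs_apply_le_of_norm_le hβ i)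
  have hj : 0 ≤ lam i * x (1 - i) := mul_nonneg (hlam i) (ha.le.trans (hx _))
  simp only [regimeField, hxi]
  nlinarith

lemma continuousOn_regimeField {s : Set ℝ} {u : ℝ → Fin 2 → ℝ}
    (hβ : ∀ i, ContinuousOn (fun t => β t i) s) (hu : ContinuousOn u s)
    (hu0 : ∀ t ∈ s, ∀ k, u t k ≠ 0) :
    ContinuousOn (fun t => regimeField β c q lam t (u t)) s := by
  have huk : ∀ k, ContinuousOn (fun t => u t k) s := continuousOn_pi.mp hu
  refine continuousOn_pi.mpr fun i => ?_
  exact (((hβ i).mul (huk i)).add (continuousOn_const.mul ((huk i).rpow_const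
    fun t ht => Or.inl (hu0 t ht i)))).add (continuousOn_const.mul (huk _))

end RegimeField

section Forward

variable {β : ℝ → Fin 2 → ℝ} {c q K a b T : ℝ} {lam : Fin 2 → ℝ}

lemma exists_clamped_regimeField_solution (hT : 0 ≤ T) (ha : 0 < a) (hab : a ≤ b) (hq : q ≤ 1)
    (hc : 0 ≤ c) (hβc : ∀ i, ContinuousOn (fun t => β t i) (Icc 0 T))
    (hβ : ∀ t ∈ Icc 0 T, ‖β t‖ ≤ K) (hlam : ‖lam‖ ≤ K) :
    ∃ u : ℝ → Fin 2 → ℝ, u 0 = 1 ∧ ∀ s ∈ Icc 0 T,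
      HasDerivWithinAt u (regimeField β c q lam s (clampVec a b (u s))) (Icc 0 T) s := by
  have hK : 0 ≤ K := (norm_nonneg _).trans hlam
  refine exists_forall_mem_Icc_hasDerivWithinAt_of_lipschitzWith
    (f := fun t x => regimeField β c q lam t (clampVec a b x))
    (K := (2 * K + c * (|q| * a ^ (q - 1))).toNNReal) (C := (2 * K + c) * b + c * (a ^ q + 1))
    hT (fun t ht => ?_) (fun x => ?_) (fun t ht x => ?_) (1 : Fin 2 → ℝ)
  · have h := (lipschitzOnWith_regimeField ha hq hc (hβ t ht) hlam).comp
      ((lipschitzWith_clampVec a b).lipschitzOnWith (s := univ)) fun x _ k => le_clampVec k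
    rw [mul_one] at h
    exact lipschitzOnWith_univ.mp h
  · exact continuousOn_regimeField hβc continuousOn_const
      fun _ _ k => (ha.trans_le (le_clampVec k)).ne'
  · refine (norm_regimeField_le ha hq hc (hβ t ht) hlam le_clampVec).trans ?_
    gcongr
    exact norm_clampVec_le ha.le hab

section ClampedSolution

variable {u : ℝ → Fin 2 → ℝ} (hu0 : u 0 = 1)
  (hu : ∀ s ∈ Icc 0 T,
    HasDerivWithinAt u (regimeField β c q lam s (clampVec a b (u s))) (Icc 0 T) s)
include hu0 hu

/-- The clamp keeps the field positive on the face `{x i = a}`, so the solution cannot cross it. -/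
lemma le_apply_of_clamped_regimeField_solution (ha : 0 < a) (ha1 : a ≤ 1) (hab : a ≤ b)
    (hβ : ∀ t ∈ Icc 0 T, ‖β t‖ ≤ K) (hlam : ∀ i, 0 ≤ lam i) (hKa : K * a < c * a ^ q)
    (k : Fin 2) : ∀ s ∈ Icc 0 T, a ≤ u s k := by
  have huk : ∀ s ∈ Icc 0 T, HasDerivWithinAt (u · k)
      (regimeField β c q lam s (clampVec a b (u s)) k) (Icc 0 T) s := fun s hs =>
    hasDerivWithinAt_pi.mp (hu s hs) k
  refine image_le_of_deriv_right_lt_deriv_boundary' (f := fun _ => a) (f' := fun _ => 0)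
    continuousOn_const (fun s _ => hasDerivWithinAt_const s _ a) (by simpa [hu0] using ha1)
    (fun s hs => (huk s hs).continuousWithinAt)
    (fun s hs => (huk s (Ico_subset_Icc_self hs)).mono_of_mem_nhdsWithin
      (Icc_mem_nhdsGE_of_mem hs)) fun s hs hsa => ?_
  exact regimeField_pos ha (hβ s (Ico_subset_Icc_self hs)) hlam hKa le_clampVec
    (clampVec_apply_of_le hab hsa.symm.le)

lemma norm_le_of_clamped_regimeField_solution (ha : 0 < a) (hq : q ≤ 1) (hc : 0 ≤ c)
    (hβ : ∀ t ∈ Icc 0 T, ‖β t‖ ≤ K) (hlam : ‖lam‖ ≤ K) :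
    ∀ s ∈ Icc 0 T, ‖u s‖ ≤ gronwallBound 1 (2 * K + c) ((2 * K + c) * a + c * (a ^ q + 1)) T := by
  have hK : 0 ≤ K := (norm_nonneg _).trans hlam
  intro s hs
  refine (norm_le_gronwallBound_of_norm_deriv_right_le (K := 2 * K + c)
    (ε := (2 * K + c) * a + c * (a ^ q + 1)) (fun t ht => (hu t ht).continuousWithinAt)
    (fun t ht => (hu t (Ico_subset_Icc_self ht)).mono_of_mem_nhdsWithin
      (Icc_mem_nhdsGE_of_mem ht)) (by rw [hu0, norm_one]) (fun t ht => ?_) s hs).trans ?_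
  · calc _ ≤ (2 * K + c) * ‖clampVec a b (u t)‖ + c * (a ^ q + 1) :=
          norm_regimeField_le ha hq hc (hβ t (Ico_subset_Icc_self ht)) hlam le_clampVec
      _ ≤ (2 * K + c) * (a + ‖u t‖) + c * (a ^ q + 1) := by
          gcongr; exact norm_clampVec_le_add ha.le
      _ = _ := by ring
  · rw [sub_zero]
    exact gronwallBound_mono zero_le_one (by positivity) (by positivity) hs.2

end ClampedSolution

theorem exists_regimeField_solution_mem_Icc (hT : 0 ≤ T) (ha : 0 < a) (ha1 : a ≤ 1) (hq : q ≤ 1)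
    (hc : 0 ≤ c) (hβc : ∀ i, ContinuousOn (fun t => β t i) (Icc 0 T))
    (hβ : ∀ t ∈ Icc 0 T, ‖β t‖ ≤ K) (hlam : ‖lam‖ ≤ K) (hlam0 : ∀ i, 0 ≤ lam i)
    (hKa : K * a < c * a ^ q) :
    ∃ u : ℝ → Fin 2 → ℝ, ∃ M, u 0 = 1 ∧
      (∀ s ∈ Icc 0 T, HasDerivWithinAt u (regimeField β c q lam s (u s)) (Icc 0 T) s) ∧
      ∀ s ∈ Icc 0 T, ∀ k, u s k ∈ Icc a M := by
  have hK : 0 ≤ K := (norm_nonneg _).trans hlam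
  set M := gronwallBound 1 (2 * K + c) ((2 * K + c) * a + c * (a ^ q + 1)) T
  have hM : 1 ≤ M := by
    simpa only [gronwallBound_x0] using
      gronwallBound_mono zero_le_one (by positivity) (by positivity) hT
  obtain ⟨u, hu0, hu⟩ :=
    exists_clamped_regimeField_solution (b := M + 1) hT ha (by linarith) hq hc hβc hβ hlam
  have hbox : ∀ s ∈ Icc 0 T, ∀ k, u s k ∈ Icc a M := fun s hs k =>
    ⟨le_apply_of_clamped_regimeField_solution hu0 hu ha ha1 (by linarith) hβ hlam0 hKa k s hs,
      (le_abs_self _).trans (abs_apply_le_of_norm_le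
        (norm_le_of_clamped_regimeField_solution hu0 hu ha hq hc hβ hlam s hs) k)⟩
  refine ⟨u, M, hu0, fun s hs => ?_, hbox⟩
  have h := hu s hs
  rwa [clampVec_eq_self fun k => ⟨(hbox s hs k).1, (hbox s hs k).2.trans (by linarith)⟩] at h

end Forward

section Terminal

variable {ι : Type*} {T : ℝ}

def IsTerminalSol (T : ℝ) (F : ℝ → (ι → ℝ) → ι → ℝ) (g : ℝ → ι → ℝ) : Prop :=
  (∀ i, ContDiffOn ℝ 1 (fun t => g t i) (Icc 0 T)) ∧
  (∀ i, ∀ t ∈ Icc 0 T, derivWithin (fun s => g s i) (Icc 0 T) t + F t (g t) i = 0) ∧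
  ∀ i, g T i = 1

lemma mapsTo_const_sub_Icc (T : ℝ) : MapsTo (T - ·) (Icc 0 T) (Icc 0 T) :=
  fun s hs => ⟨by linarith [hs.2], by linarith [hs.1]⟩

lemma hasDerivWithinAt_comp_const_sub_Icc {E : Type*} [NormedAddCommGroup E] [NormedSpace ℝ E]
    {f : ℝ → E} {f' : E} {t : ℝ} (hf : HasDerivWithinAt f f' (Icc 0 T) (T - t)) :
    HasDerivWithinAt (fun s => f (T - s)) (-f') (Icc 0 T) t := by
  simpa [Function.comp_def] using
    hf.scomp t ((hasDerivAt_id t).const_sub T).hasDerivWithinAt (mapsTo_const_sub_Icc T)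

lemma IsTerminalSol.hasDerivWithinAt_comp_const_sub {F : ℝ → (ι → ℝ) → ι → ℝ} {g : ℝ → ι → ℝ}
    (hg : IsTerminalSol T F g) :
    ∀ s ∈ Icc 0 T, HasDerivWithinAt (fun s => g (T - s)) (F (T - s) (g (T - s))) (Icc 0 T) s := by
  intro s hs
  refine hasDerivWithinAt_pi.mpr fun i => ?_
  have hTs := mapsTo_const_sub_Icc T hs
  have hd := ((hg.1 i).differentiableOn one_ne_zero _ hTs).hasDerivWithinAt
  rw [eq_neg_of_add_eq_zero_left (hg.2.1 i _ hTs)] at hd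
  simpa using hasDerivWithinAt_comp_const_sub_Icc hd

lemma isTerminalSol_comp_const_sub {F : ℝ → (ι → ℝ) → ι → ℝ} {u : ℝ → ι → ℝ} (hT : 0 < T)
    (hu : ∀ s ∈ Icc 0 T, HasDerivWithinAt u (F (T - s) (u s)) (Icc 0 T) s)
    (hFu : ContinuousOn (fun s => F (T - s) (u s)) (Icc 0 T)) (hu0 : u 0 = 1) :
    IsTerminalSol T F (fun t => u (T - t)) := by
  have hd : ∀ i, ∀ t ∈ Icc 0 T,
      HasDerivWithinAt (fun t => u (T - t) i) (-F t (u (T - t)) i) (Icc 0 T) t := fun i t ht => by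
    simpa using hasDerivWithinAt_comp_const_sub_Icc
      (hasDerivWithinAt_pi.mp (hu _ (mapsTo_const_sub_Icc T ht)) i)
  have hderiv : ∀ i, ∀ t ∈ Icc 0 T,
      derivWithin (fun t => u (T - t) i) (Icc 0 T) t = -F t (u (T - t)) i := fun i t ht =>
    (hd i t ht).derivWithin (uniqueDiffOn_Icc hT t ht)
  have hcont : ∀ i, ContinuousOn (fun t => -F t (u (T - t)) i) (Icc 0 T) := fun i =>
    ((continuousOn_pi.mp (hFu.comp (by fun_prop) (mapsTo_const_sub_Icc T)) i).neg).congr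
      fun t _ => by simp
  refine ⟨fun i => (contDiffOn_one_iff_derivWithin (uniqueDiffOn_Icc hT)).mpr
    ⟨fun t ht => (hd i t ht).differentiableWithinAt, (hcont i).congr (hderiv i)⟩,
    fun i t ht => by rw [hderiv i t ht, neg_add_cancel], fun i => by simp [hu0]⟩

end Terminal

theorem exists_isTerminalSol_regimeField {T c q : ℝ} {α : ℝ → Fin 2 → ℝ} {lam : Fin 2 → ℝ}
    (hT : 0 < T) (hq : q < 1) (hc : 0 < c) (hα : ∀ i, ContinuousOn (fun t => α t i) (Icc 0 T))
    (hlam : ∀ i, 0 ≤ lam i) :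
    ∃ g, IsTerminalSol T (regimeField α c q lam) g ∧
      (∀ g₂, IsTerminalSol T (regimeField α c q lam) g₂ → ∀ i, ∀ t ∈ Icc 0 T, g₂ t i = g t i) ∧
      ∃ m M : ℝ, 0 < m ∧ m ≤ M ∧ ∀ i, ∀ t ∈ Icc 0 T, m ≤ g t i ∧ g t i ≤ M := by
  have hmaps := mapsTo_const_sub_Icc T
  have hβc : ∀ i, ContinuousOn (fun s => α (T - s) i) (Icc 0 T) := fun i =>
    (hα i).comp (by fun_prop) hmaps
  obtain ⟨K₀, hK₀⟩ := isCompact_Icc.exists_bound_of_continuousOn (continuousOn_pi.mpr hα)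
  have hβ : ∀ s ∈ Icc 0 T, ‖α (T - s)‖ ≤ max K₀ ‖lam‖ := fun s hs =>
    (hK₀ _ (hmaps hs)).trans (le_max_left _ _)
  obtain ⟨a, ha, ha1, hKa⟩ :=
    exists_mul_lt_mul_rpow ((norm_nonneg lam).trans (le_max_right K₀ _)) hc hq
  obtain ⟨u, M, hu0, hu, hbox⟩ := exists_regimeField_solution_mem_Icc (β := fun s => α (T - s))
    hT.le ha ha1 hq.le hc.le hβc hβ (le_max_right _ _) hlam hKa
  have hupos : ∀ s ∈ Icc 0 T, ∀ k, u s k ≠ 0 := fun s hs k =>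
    (ha.trans_le (hbox s hs k).1).ne'
  have hbox0 := hbox 0 ⟨le_rfl, hT.le⟩ 0
  refine ⟨fun t => u (T - t), isTerminalSol_comp_const_sub hT hu
    (continuousOn_regimeField hβc (fun s hs => (hu s hs).continuousWithinAt) hupos) hu0,
    fun g₂ hg₂ i t ht => ?_, a, M, ha, hbox0.1.trans hbox0.2,
    fun i t ht => hbox (T - t) (hmaps ht) i⟩
  have heq := ODE_solution_unique_of_isOpen (U := univ.pi fun _ => Ioi (a / 2))
    (isOpen_set_pi finite_univ fun _ _ => isOpen_Ioi)
    (fun s hs => (lipschitzOnWith_regimeField (half_pos ha) hq.le hc.le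
      (hβ s (Ico_subset_Icc_self hs)) (le_max_right _ _)).mono fun x hx k => (hx k trivial).le)
    hu (fun s hs k _ => mem_Ioi.mpr (by linarith [(hbox s (Ico_subset_Icc_self hs) k).1]))
    hg₂.hasDerivWithinAt_comp_const_sub
    (by simp only [sub_zero, hu0]; exact (funext hg₂.2.2).symm) (hmaps ht)
  simpa using congrFun heq.symm i

theorem stmt_7_general (T γ ρ : ℝ) (hT : 0 < T) (hγ : γ < 1)
    (r μ σ : ℝ → Fin 2 → ℝ)
    (hr : ∀ i, ContinuousOn (fun t => r t i) (Set.Icc 0 T))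
    (hμ : ∀ i, ContinuousOn (fun t => μ t i) (Set.Icc 0 T))
    (hσc : ∀ i, ContinuousOn (fun t => σ t i) (Set.Icc 0 T))
    (hσ : ∀ t i, 0 < σ t i)
    (lam : Fin 2 → ℝ) (hlam : ∀ i, 0 ≤ lam i) :
    ∃ g : ℝ → Fin 2 → ℝ,
      IsPrecommitSol T γ ρ (betaFn γ r μ σ) lam g ∧
      (∀ g₂ : ℝ → Fin 2 → ℝ, IsPrecommitSol T γ ρ (betaFn γ r μ σ) lam g₂ →
        ∀ i : Fin 2, ∀ t ∈ Set.Icc 0 T, g₂ t i = g t i) ∧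
      ∃ m M : ℝ, 0 < m ∧ m ≤ M ∧
        ∀ i : Fin 2, ∀ t ∈ Set.Icc 0 T, m ≤ g t i ∧ g t i ≤ M := by
  have hq : γ / (γ - 1) < 1 := by rw [div_lt_one_of_neg (by linarith)]; linarith
  have hα : ∀ i, ContinuousOn (fun t => betaFn γ r μ σ t i - ρ - lam i) (Icc 0 T) := fun i => by
    have hden : ∀ t ∈ Icc 0 T, 2 * σ t i ^ 2 * (1 - γ) ≠ 0 := fun t _ => by
      have := hσ t i; have : 0 < 1 - γ := by linarith
      positivity
    exact (((continuousOn_const.mul (hr i)).add ((continuousOn_const.mul ((hμ i).pow 2)).div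
      ((continuousOn_const.mul ((hσc i).pow 2)).mul continuousOn_const) hden)).sub
      continuousOn_const).sub continuousOn_const
  have hsol : ∀ g, IsPrecommitSol T γ ρ (betaFn γ r μ σ) lam g ↔
      IsTerminalSol T (regimeField (fun t i => betaFn γ r μ σ t i - ρ - lam i) (1 - γ)
        (γ / (γ - 1)) lam) g := fun g => by
    simp only [IsPrecommitSol, IsTerminalSol, regimeField, add_assoc]
  simp only [hsol]
  exact exists_isTerminalSol_regimeField hT hq (by linarith) hα hlam

/-- Remark 4.3 of the paper: existence and uniqueness of a continuously differentiable,
uniformly bounded (above and below by positive constants) solution `ĝ` of the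
pre-commitment ODE system with a single discount rate `ρ > 0` and terminal value `1`. -/
theorem stmt_7 (T γ ρ : ℝ) (hT : 0 < T) (hγ : γ < 1) (hγ0 : γ ≠ 0) (hρ : 0 < ρ)
    (r μ σ : ℝ → Fin 2 → ℝ)
    (hr : ∀ i, ContinuousOn (fun t => r t i) (Set.Icc 0 T))
    (hμ : ∀ i, ContinuousOn (fun t => μ t i) (Set.Icc 0 T))
    (hσc : ∀ i, ContinuousOn (fun t => σ t i) (Set.Icc 0 T))
    (hσ : ∀ t i, 0 < σ t i)
    (lam : Fin 2 → ℝ) (hlam : ∀ i, 0 ≤ lam i) :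
    ∃ g : ℝ → Fin 2 → ℝ,
      IsPrecommitSol T γ ρ (betaFn γ r μ σ) lam g ∧
      (∀ g₂ : ℝ → Fin 2 → ℝ, IsPrecommitSol T γ ρ (betaFn γ r μ σ) lam g₂ →
        ∀ i : Fin 2, ∀ t ∈ Set.Icc 0 T, g₂ t i = g t i) ∧
      ∃ m M : ℝ, 0 < m ∧ m ≤ M ∧
        ∀ i : Fin 2, ∀ t ∈ Set.Icc 0 T, m ≤ g t i ∧ g t i ≤ M :=
  stmt_7_general T γ ρ hT hγ r μ σ hr hμ hσc hσ lam hlam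
end

section
/- Let U : (0,∞) → ℝ be continuous and F₁, F₂ : [0,T] × (0,∞) × {0,1} → ℝ be continuous. Suppose f, defined on {(t,s) : 0 ≤ t ≤ s ≤ T} × (0,∞) × {0,1}, is continuous with continuous partial derivatives ∂f/∂t, ∂f/∂x, ∂²f/∂x², solves for t < s: ∂f/∂t(t,s,x,i) + (r(t,i)x + μ(t,i)F₁(t,x,i) − F₂(t,x,i))·∂f/∂x(t,s,x,i) + (σ(t,i)²F₁(t,x,i)²/2)·∂²f/∂x²(t,s,x,i) + λ_{ii} f(t,s,x,i) + λ_{ij} f(t,s,x,j) = 0 with f(t,t,x,i) = U(F₂(t,x,i)); and suppose h : [0,T] × (0,∞) × {0,1} → ℝ is C^{1,2} and solves ∂h/∂t(t,x,i) + (r(t,i)x + μ(t,i)F₁(t,x,i) − F₂(t,x,i))·∂h/∂x(t,x,i) + (σ(t,i)²F₁(t,x,i)²/2)·∂²h/∂x²(t,x,i) + λ_{ii} h(t,x,i) + λ_{ij} h(t,x,j) = 0 with h(T,x,i) = U(x). Define v(t,x,i) = ∫_t^T e^{−ρ_i(s−t)} f(t,s,x,i) ds + e^{−ρ_i(T−t)}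 h(t,x,i) and v̄(t,x,i) = ∫_t^T e^{−ρ_j(s−t)} f(t,s,x,i) ds + e^{−ρ_j(T−t)} h(t,x,i) (j = 1−i). Then for every t ∈ [0,T), x > 0, i ∈ {0,1}, j = 1−i: ∂v/∂t(t,x,i) + (r(t,i)x + μ(t,i)F₁(t,x,i) − F₂(t,x,i))·∂v/∂x(t,x,i) + (σ(t,i)²F₁(t,x,i)²/2)·∂²v/∂x²(t,x,i) + U(F₂(t,x,i)) + λ_{ii}·v(t,x,i) − ρ_i·v(t,x,i) + λ_{ij}·v̄(t,x,j) = 0, and ∂v̄/∂t(t,x,i) + (r(t,i)x + μ(t,i)F₁(t,x,i) − F₂(t,x,i))·∂v̄/∂x(t,x,i) + (σ(t,i)²F₁(t,x,i)²/2)·∂²v̄/∂x²(t,x,i) + U(F₂(t,x,i)) + λ_{ii}·v̄(t,x,i) − ρ_j·v̄(t,x,i) + λ_{ij}·v(t,x,j) = 0, with boundary conditions v(T,x,i) = v̄(T,x,i) = U(x). -/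
/-!
Write `v = ∫_t^T e^{-ρ(s-t)} f(t,s,x) ds + e^{-ρ(T-t)} h(t,x)`. Differentiating in `t` gives
`-f(t,t,x) = -U(F₂(t,x))` from the moving lower limit, `ρ v` from the discount factors, and the
discounted integral of `∂ₜf` plus `e^{-ρ(T-t)} ∂ₜh`; the `x`-derivatives pass under the integral.
So the generator applied to `v` is `ρ v - U(F₂)` plus the discounted integral of the equations
satisfied by `f` and `h`, which vanish. The coupling term only involves `f(·,·,·,j)` and
`h(·,·,j)` with the same discount rate, which is why `v` is coupled to `v̄(·,·,j)` and conversely.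

To differentiate under the moving lower limit, `g(t,s)` (known only for `t ≤ s`) is extended by
`g(min t s, s)`. This extension is Lipschitz in `t`, so dominated convergence applies to
`∫_{t₀}^b`, and the remaining piece `∫_{t₀}^t` is the fundamental theorem of calculus up to an
`O((t - t₀)²)` error.
-/

open MeasureTheory Set Filter Topology Asymptotics Function
open scoped Interval NNReal

theorem hasDerivWithinAt_zero_of_abs_sub_le_sq {f : ℝ → ℝ} {S : Set ℝ} {x C : ℝ}
    (hf : ∀ y ∈ S, |f y - f x| ≤ C * (y - x) ^ 2) : HasDerivWithinAt f 0 S x := by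
  rw [hasDerivWithinAt_iff_isLittleO]
  have hO : (fun y => f y - f x - (y - x) • (0 : ℝ)) =O[𝓝[S] x] fun y => ‖y - x‖ ^ 2 :=
    IsBigO.of_bound C <| eventually_nhdsWithin_of_forall fun y hy => by
      simpa [Real.norm_eq_abs] using hf y hy
  exact hO.trans_isLittleO ((isLittleO_pow_sub_sub x one_lt_two).mono nhdsWithin_le_nhds)

theorem hasDerivWithinAt_intervalIntegral_of_abs_sub_le {G : ℝ → ℝ → ℝ} {G' : ℝ → ℝ}
    {S : Set ℝ} {a b t₀ M : ℝ} (ht₀ : t₀ ∈ S)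
    (hint : ∀ t ∈ S, IntervalIntegrable (G t) volume a b)
    (hlip : ∀ t ∈ S, ∀ s ∈ Ι a b, |G t s - G t₀ s| ≤ M * |t - t₀|)
    (hder : ∀ s ∈ Ι a b, HasDerivWithinAt (G · s) (G' s) S t₀) :
    HasDerivWithinAt (fun t => ∫ s in a..b, G t s) (∫ s in a..b, G' s) S t₀ := by
  rw [hasDerivWithinAt_iff_tendsto_slope]
  have hS : ∀ᶠ t in 𝓝[S \ {t₀}] t₀, t ∈ S \ {t₀} := self_mem_nhdsWithin
  have hslope : ∀ t ∈ S \ {t₀},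
      ∫ s in a..b, slope (G · s) t₀ t = slope (fun t => ∫ s in a..b, G t s) t₀ t := by
    intro t ht
    simp only [slope_def_field, div_eq_inv_mul]
    rw [intervalIntegral.integral_const_mul,
      intervalIntegral.integral_sub (hint t ht.1) (hint t₀ ht₀)]
  refine Tendsto.congr' (eventuallyEq_of_mem hS hslope) <|
    intervalIntegral.tendsto_integral_filter_of_dominated_convergence (fun _ => M) ?_ ?_
      intervalIntegrable_const
      (ae_of_all _ fun s hs => hasDerivWithinAt_iff_tendsto_slope.1 (hder s hs))
  · filter_upwards [hS] with t ht
    simp only [slope_def_field, div_eq_inv_mul]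
    exact (((hint t ht.1).sub (hint t₀ ht₀)).const_mul _).def'.aestronglyMeasurable
  · filter_upwards [hS] with t ht
    refine ae_of_all _ fun s hs => ?_
    rw [slope_def_field, Real.norm_eq_abs, abs_div,
      div_le_iff₀ (abs_pos.2 (sub_ne_zero.2 ht.2))]
    exact hlip t ht.1 s hs

theorem hasDerivWithinAt_intervalIntegral_lower_of_abs_sub_le {G : ℝ → ℝ → ℝ} {G' : ℝ → ℝ}
    {a b t₀ M : ℝ} (ht₀ : t₀ ∈ Icc a b)
    (hcont : ∀ t ∈ Icc a b, ContinuousOn (G t) (Icc a b))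
    (hlip : ∀ t ∈ Icc a b, ∀ s ∈ Icc a b, |G t s - G t₀ s| ≤ M * |t - t₀|)
    (hder : ∀ s ∈ Ioc t₀ b, HasDerivWithinAt (G · s) (G' s) (Icc a b) t₀) :
    HasDerivWithinAt (fun t => ∫ s in t..b, G t s) ((∫ s in t₀..b, G' s) - G t₀ t₀)
      (Icc a b) t₀ := by
  have hb : b ∈ Icc a b := ⟨ht₀.1.trans ht₀.2, le_rfl⟩
  have hint : ∀ t ∈ Icc a b, ∀ u ∈ Icc a b, ∀ v ∈ Icc a b,
      IntervalIntegrable (G t) volume u v := fun t ht u hu v hv =>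
    ((hcont t ht).mono (uIcc_subset_Icc hu hv)).intervalIntegrable
  have hΦ : HasDerivWithinAt (fun t => ∫ s in t₀..b, G t s) (∫ s in t₀..b, G' s)
      (Icc a b) t₀ :=
    hasDerivWithinAt_intervalIntegral_of_abs_sub_le ht₀ (fun t ht => hint t ht t₀ ht₀ b hb)
      (fun t ht s hs => hlip t ht s (uIoc_subset_uIcc.trans (uIcc_subset_Icc ht₀ hb) hs))
      (fun s hs => hder s (by rwa [uIoc_of_le ht₀.2] at hs))
  have hF : HasDerivWithinAt (fun t => ∫ s in t₀..t, G t₀ s) (G t₀ t₀) (Icc a b) t₀ := by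
    have : Fact (t₀ ∈ Icc a b) := ⟨ht₀⟩
    exact intervalIntegral.integral_hasDerivWithinAt_right (hint t₀ ht₀ t₀ ht₀ t₀ ht₀)
      ((hcont t₀ ht₀).stronglyMeasurableAtFilter_nhdsWithin measurableSet_Icc t₀)
      (hcont t₀ ht₀ t₀ ht₀)
  have hR : HasDerivWithinAt (fun t => ∫ s in t₀..t, (G t s - G t₀ s)) 0 (Icc a b) t₀ := by
    refine hasDerivWithinAt_zero_of_abs_sub_le_sq (C := M) fun t ht => ?_
    have hbound := intervalIntegral.norm_integral_le_of_norm_le_const (a := t₀) (b := t)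
      (f := fun s => G t s - G t₀ s) (C := M * |t - t₀|) fun s hs =>
        hlip t ht s (uIoc_subset_uIcc.trans (uIcc_subset_Icc ht₀ ht) hs)
    rw [intervalIntegral.integral_same, sub_zero]
    calc |∫ s in t₀..t, (G t s - G t₀ s)| ≤ M * |t - t₀| * |t - t₀| := hbound
      _ = M * (t - t₀) ^ 2 := by rw [mul_assoc, ← sq, sq_abs]
  have hsplit : ∀ t ∈ Icc a b, ∫ s in t..b, G t s
      = (∫ s in t₀..b, G t s) - (∫ s in t₀..t, G t₀ s) - ∫ s in t₀..t, (G t s - G t₀ s) := by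
    intro t ht
    rw [intervalIntegral.integral_sub (hint t ht t₀ ht₀ t ht) (hint t₀ ht₀ t₀ ht₀ t ht),
      ← intervalIntegral.integral_interval_sub_left (hint t ht t₀ ht₀ b hb)
        (hint t ht t₀ ht₀ t ht)]
    ring
  simpa using ((hΦ.sub hF).sub hR).congr_of_mem hsplit ht₀

def triangle (a b : ℝ) : Set (ℝ × ℝ) := {p | a ≤ p.1 ∧ p.1 ≤ p.2 ∧ p.2 ≤ b}

theorem isCompact_triangle (a b : ℝ) : IsCompact (triangle a b) := by
  refine isCompact_Icc.of_isClosed_subset ?_ fun p (hp : a ≤ p.1 ∧ p.1 ≤ p.2 ∧ p.2 ≤ b) =>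
    (⟨⟨hp.1, hp.1.trans hp.2.1⟩, ⟨hp.2.1.trans hp.2.2, hp.2.2⟩⟩ : p ∈ Icc (a, a) (b, b))
  exact (isClosed_le continuous_const continuous_fst).inter
    ((isClosed_le continuous_fst continuous_snd).inter
      (isClosed_le continuous_snd continuous_const))

theorem exists_lipschitzOnWith_fst_of_triangle {g g' : ℝ → ℝ → ℝ} {a b : ℝ}
    (hg' : ContinuousOn (uncurry g') (triangle a b))
    (hder : ∀ s ∈ Icc a b, ∀ τ ∈ Icc a s, HasDerivWithinAt (g · s) (g' τ s) (Icc a s) τ) :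
    ∃ K : ℝ≥0, ∀ s ∈ Icc a b, LipschitzOnWith K (g · s) (Icc a s) := by
  obtain ⟨C, hC⟩ := (isCompact_triangle a b).exists_bound_of_continuousOn hg'
  refine ⟨C.toNNReal, fun s hs => (convex_Icc a s).lipschitzOnWith_of_nnnorm_hasDerivWithin_le
    (hder s hs) fun τ hτ => ?_⟩
  rw [← NNReal.coe_le_coe, coe_nnnorm]
  exact (hC (τ, s) ⟨hτ.1, hτ.2, hs.2⟩).trans (Real.le_coe_toNNReal C)

theorem hasDerivWithinAt_intervalIntegral_triangle {g g' : ℝ → ℝ → ℝ} {a b t₀ : ℝ}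
    (ht₀ : t₀ ∈ Icc a b) (hg : ContinuousOn (uncurry g) (triangle a b))
    (hg' : ContinuousOn (uncurry g') (triangle a b))
    (hder : ∀ s ∈ Icc a b, ∀ τ ∈ Icc a s, HasDerivWithinAt (g · s) (g' τ s) (Icc a s) τ) :
    HasDerivWithinAt (fun t => ∫ s in t..b, g t s) ((∫ s in t₀..b, g' t₀ s) - g t₀ t₀)
      (Icc a b) t₀ := by
  obtain ⟨K, hK⟩ := exists_lipschitzOnWith_fst_of_triangle hg' hder
  let G : ℝ → ℝ → ℝ := fun t s => g (min t s) s
  have hmin : ∀ t ∈ Icc a b, ∀ s ∈ Icc a b, min t s ∈ Icc a s :=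
    fun t ht s hs => ⟨le_min ht.1 hs.1, min_le_right t s⟩
  have hcont : ∀ t ∈ Icc a b, ContinuousOn (G t) (Icc a b) := fun t ht =>
    hg.comp (f := fun s => (min t s, s)) (by fun_prop)
      fun s hs => ⟨(hmin t ht s hs).1, (hmin t ht s hs).2, hs.2⟩
  have hlip : ∀ t ∈ Icc a b, ∀ s ∈ Icc a b, |G t s - G t₀ s| ≤ K * |t - t₀| := by
    intro t ht s hs
    have hGlip : LipschitzOnWith K (G · s) (Icc a b) := by
      have h := (hK s hs).comp (LipschitzWith.id.min_const s).lipschitzOnWith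
        fun t ht => hmin t ht s hs
      rwa [mul_one] at h
    simpa [Real.dist_eq] using hGlip.dist_le_mul t ht t₀ ht₀
  have hder' : ∀ s ∈ Ioc t₀ b, HasDerivWithinAt (G · s) (g' t₀ s) (Icc a b) t₀ := by
    intro s hs
    have hloc : Icc a b ∩ Iio s ∈ 𝓝[Icc a b] t₀ := inter_mem_nhdsWithin _ (Iio_mem_nhds hs.1)
    refine HasDerivWithinAt.mono_of_mem_nhdsWithin ?_ hloc
    refine ((hder s ⟨ht₀.1.trans hs.1.le, hs.2⟩ t₀ ⟨ht₀.1, hs.1.le⟩).mono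
      fun τ hτ => ⟨hτ.1.1, hτ.2.le⟩).congr (fun τ hτ => ?_) ?_
    · simp [G, min_eq_left (mem_Iio.1 hτ.2).le]
    · simp [G, min_eq_left hs.1.le]
  have hGg : ∀ t ∈ Icc a b, ∫ s in t..b, g t s = ∫ s in t..b, G t s := by
    intro t ht
    refine intervalIntegral.integral_congr fun s hs => ?_
    rw [uIcc_of_le ht.2] at hs
    simp [G, min_eq_left hs.1]
  simpa [G] using (hasDerivWithinAt_intervalIntegral_lower_of_abs_sub_le ht₀ hcont hlip
    hder').congr_of_mem hGg ht₀

theorem hasDerivAt_intervalIntegral_of_continuousOn {F F' : ℝ → ℝ → ℝ} {a b x : ℝ}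
    {V : Set ℝ} (hV : IsOpen V) (hx : x ∈ V)
    (hF : ContinuousOn (uncurry F) ([[a, b]] ×ˢ V))
    (hF' : ContinuousOn (uncurry F') ([[a, b]] ×ˢ V))
    (hder : ∀ s ∈ [[a, b]], ∀ y ∈ V, HasDerivAt (F s ·) (F' s y) y) :
    HasDerivAt (fun y => ∫ s in a..b, F s y) (∫ s in a..b, F' s x) x := by
  obtain ⟨ε, hε, hεV⟩ := Metric.nhds_basis_closedBall.mem_iff.1 (hV.mem_nhds hx)
  have hball : Metric.ball x ε ⊆ V := Metric.ball_subset_closedBall.trans hεV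
  obtain ⟨C, hC⟩ := (isCompact_uIcc.prod (isCompact_closedBall x ε)).exists_bound_of_continuousOn
    (hF'.mono (prod_mono subset_rfl hεV))
  have hslice : ∀ {H : ℝ → ℝ → ℝ}, ContinuousOn (uncurry H) ([[a, b]] ×ˢ V) →
      ∀ y ∈ V, ContinuousOn (H · y) [[a, b]] := fun hH y hy =>
    hH.comp (f := fun s => (s, y)) (by fun_prop) fun s hs => ⟨hs, hy⟩
  have hmeas : ∀ {H : ℝ → ℝ → ℝ}, ContinuousOn (uncurry H) ([[a, b]] ×ˢ V) →
      ∀ y ∈ V, AEStronglyMeasurable (H · y) (volume.restrict (Ι a b)) := fun hH y hy =>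
    ((hslice hH y hy).mono uIoc_subset_uIcc).aestronglyMeasurable measurableSet_uIoc
  exact (intervalIntegral.hasDerivAt_integral_of_dominated_loc_of_deriv_le
    (F := fun y s => F s y) (F' := fun y s => F' s y) (bound := fun _ => C)
    (Metric.ball_mem_nhds x hε)
    (eventually_of_mem (Metric.ball_mem_nhds x hε) fun y hy => hmeas hF y (hball hy))
    (hslice hF x hx).intervalIntegrable (hmeas hF' x hx)
    (ae_of_all _ fun s hs y hy =>
      hC (s, y) ⟨uIoc_subset_uIcc hs, Metric.ball_subset_closedBall hy⟩)
    intervalIntegrable_const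
    (ae_of_all _ fun s hs y hy => hder s (uIoc_subset_uIcc hs) y (hball hy))).2

def triangleProd (a b : ℝ) (V : Set ℝ) : Set (ℝ × ℝ × ℝ) :=
  {p | a ≤ p.1 ∧ p.1 ≤ p.2.1 ∧ p.2.1 ≤ b ∧ p.2.2 ∈ V}

theorem ContinuousOn.triangle_of_triangleProd {φ : ℝ → ℝ → ℝ → ℝ} {a b x : ℝ} {V : Set ℝ}
    (hφ : ContinuousOn (fun p : ℝ × ℝ × ℝ => φ p.1 p.2.1 p.2.2) (triangleProd a b V))
    (hx : x ∈ V) : ContinuousOn (uncurry (φ · · x)) (triangle a b) :=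
  hφ.comp (f := fun p : ℝ × ℝ => (p.1, p.2, x)) (by fun_prop)
    fun _ hp => ⟨hp.1, hp.2.1, hp.2.2, hx⟩

theorem ContinuousOn.uIcc_prod_of_triangleProd {φ : ℝ → ℝ → ℝ → ℝ} {a b t : ℝ} {V : Set ℝ}
    (hφ : ContinuousOn (fun p : ℝ × ℝ × ℝ => φ p.1 p.2.1 p.2.2) (triangleProd a b V))
    (ht : t ∈ Icc a b) : ContinuousOn (uncurry (φ t)) ([[t, b]] ×ˢ V) := by
  rw [uIcc_of_le ht.2]
  exact hφ.comp (f := fun p : ℝ × ℝ => (t, p.1, p.2)) (by fun_prop)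
    fun _ hp => ⟨ht.1, hp.1.1, hp.1.2, hp.2⟩

/-- The paper's `v` (with `ρ = ρᵢ`) and `v̄` (with `ρ = ρⱼ`), for `φ = f(·,·,·,i)`,
`ψ = h(·,·,i)`. -/
noncomputable def discountedValue (T ρ : ℝ) (φ : ℝ → ℝ → ℝ → ℝ) (ψ : ℝ → ℝ → ℝ) (t x : ℝ) : ℝ :=
  (∫ s in t..T, Real.exp (-ρ * (s - t)) * φ t s x) + Real.exp (-ρ * (T - t)) * ψ t x

theorem hasDerivAt_exp_neg_mul_sub (ρ s τ : ℝ) :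
    HasDerivAt (fun τ => Real.exp (-ρ * (s - τ))) (ρ * Real.exp (-ρ * (s - τ))) τ := by
  have h : HasDerivAt (fun τ => -ρ * (s - τ)) ρ τ := by
    simpa using ((hasDerivAt_id τ).const_sub s).const_mul (-ρ)
  simpa [mul_comm] using h.exp

section DiscountedValue

variable {T ρ t x : ℝ} {φ φ' φ₁ φ₂ : ℝ → ℝ → ℝ → ℝ} {ψ ψ' ψ₁ ψ₂ : ℝ → ℝ → ℝ}

theorem discountedValue_add (h₁ : IntervalIntegrable (φ₁ t · x) volume t T)
    (h₂ : IntervalIntegrable (φ₂ t · x) volume t T) :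
    discountedValue T ρ (φ₁ + φ₂) (ψ₁ + ψ₂) t x
      = discountedValue T ρ φ₁ ψ₁ t x + discountedValue T ρ φ₂ ψ₂ t x := by
  have hexp : ContinuousOn (fun s => Real.exp (-ρ * (s - t))) [[t, T]] := by fun_prop
  simp only [discountedValue, Pi.add_apply, mul_add]
  rw [intervalIntegral.integral_add (h₁.continuousOn_mul hexp) (h₂.continuousOn_mul hexp)]
  ring

theorem discountedValue_smul (c : ℝ) :
    discountedValue T ρ (c • φ) (c • ψ) t x = c * discountedValue T ρ φ ψ t x := by
  simp only [discountedValue, Pi.smul_apply, smul_eq_mul, mul_left_comm _ c,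
    intervalIntegral.integral_const_mul]
  ring

theorem discountedValue_eq_zero (htT : t ≤ T) (hφ : ∀ s ∈ Ioc t T, φ t s x = 0)
    (hψ : ψ t x = 0) : discountedValue T ρ φ ψ t x = 0 := by
  rw [discountedValue, hψ, mul_zero, add_zero]
  refine intervalIntegral.integral_zero_ae (ae_of_all _ fun s hs => ?_)
  rw [uIoc_of_le htT] at hs
  rw [hφ s hs, mul_zero]

theorem hasDerivWithinAt_discountedValue_fst {a : ℝ} (ht : t ∈ Icc a T)
    (hφ : ContinuousOn (uncurry (φ · · x)) (triangle a T))
    (hφ' : ContinuousOn (uncurry (φ' · · x)) (triangle a T))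
    (hφd : ∀ s ∈ Icc a T, ∀ τ ∈ Icc a s, HasDerivWithinAt (φ · s x) (φ' τ s x) (Icc a s) τ)
    (hψd : HasDerivWithinAt (ψ · x) (ψ' t x) (Icc a T) t) :
    HasDerivWithinAt (discountedValue T ρ φ ψ · x)
      (ρ * discountedValue T ρ φ ψ t x + discountedValue T ρ φ' ψ' t x - φ t t x)
      (Icc a T) t := by
  have hexp : Continuous fun p : ℝ × ℝ => Real.exp (-ρ * (p.2 - p.1)) := by fun_prop
  have hderI := hasDerivWithinAt_intervalIntegral_triangle
    (g := fun τ s => Real.exp (-ρ * (s - τ)) * φ τ s x)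
    (g' := fun τ s => ρ * Real.exp (-ρ * (s - τ)) * φ τ s x
      + Real.exp (-ρ * (s - τ)) * φ' τ s x)
    ht (hexp.continuousOn.mul hφ)
    (((continuous_const.mul hexp).continuousOn.mul hφ).add (hexp.continuousOn.mul hφ'))
    fun s hs τ hτ => (hasDerivAt_exp_neg_mul_sub ρ s τ).hasDerivWithinAt.mul (hφd s hs τ hτ)
  have hintegrable : ∀ {χ : ℝ → ℝ → ℝ → ℝ}, ContinuousOn (uncurry (χ · · x)) (triangle a T) →
      IntervalIntegrable (fun s => Real.exp (-ρ * (s - t)) * χ t s x) volume t T := by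
    intro χ hχ
    refine ContinuousOn.intervalIntegrable ?_
    rw [uIcc_of_le ht.2]
    exact (hexp.continuousOn.mul hχ).comp (f := fun s => (t, s)) (by fun_prop)
      fun s hs => ⟨ht.1, hs.1, hs.2⟩
  refine (hderI.add ((hasDerivAt_exp_neg_mul_sub ρ T t).hasDerivWithinAt.mul hψd)).congr_deriv ?_
  simp only [mul_assoc]
  rw [intervalIntegral.integral_add ((hintegrable hφ).const_mul ρ) (hintegrable hφ'),
    intervalIntegral.integral_const_mul]
  simp only [discountedValue, sub_self, mul_zero, Real.exp_zero, one_mul]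
  ring

theorem hasDerivAt_discountedValue_snd {V : Set ℝ} (hV : IsOpen V) (hx : x ∈ V)
    (hφ : ContinuousOn (uncurry (φ t)) ([[t, T]] ×ˢ V))
    (hφ' : ContinuousOn (uncurry (φ' t)) ([[t, T]] ×ˢ V))
    (hφd : ∀ s ∈ [[t, T]], ∀ y ∈ V, HasDerivAt (φ t s ·) (φ' t s y) y)
    (hψd : HasDerivAt (ψ t ·) (ψ' t x) x) :
    HasDerivAt (discountedValue T ρ φ ψ t ·) (discountedValue T ρ φ' ψ' t x) x := by
  have hexp : ContinuousOn (fun p : ℝ × ℝ => Real.exp (-ρ * (p.1 - t))) ([[t, T]] ×ˢ V) := by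
    fun_prop
  exact (hasDerivAt_intervalIntegral_of_continuousOn
    (F := fun s y => Real.exp (-ρ * (s - t)) * φ t s y)
    (F' := fun s y => Real.exp (-ρ * (s - t)) * φ' t s y) hV hx (hexp.mul hφ) (hexp.mul hφ')
    fun s hs y hy => (hφd s hs y hy).const_mul _).add (hψd.const_mul _)

end DiscountedValue

theorem discountedValue_hjb {T ρ a t x D A c c' : ℝ} {V : Set ℝ}
    {φ φt φx φxx φ' : ℝ → ℝ → ℝ → ℝ} {ψ ψt ψx ψxx ψ' : ℝ → ℝ → ℝ}
    (ht : t ∈ Ico a T) (hV : IsOpen V) (hx : x ∈ V)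
    (hφc : ContinuousOn (fun p : ℝ × ℝ × ℝ => φ p.1 p.2.1 p.2.2) (triangleProd a T V))
    (hφtc : ContinuousOn (fun p : ℝ × ℝ × ℝ => φt p.1 p.2.1 p.2.2) (triangleProd a T V))
    (hφxc : ContinuousOn (fun p : ℝ × ℝ × ℝ => φx p.1 p.2.1 p.2.2) (triangleProd a T V))
    (hφxxc : ContinuousOn (fun p : ℝ × ℝ × ℝ => φxx p.1 p.2.1 p.2.2) (triangleProd a T V))
    (hφ'c : ContinuousOn (fun p : ℝ × ℝ × ℝ => φ' p.1 p.2.1 p.2.2) (triangleProd a T V))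
    (hφt : ∀ s ∈ Icc a T, ∀ τ ∈ Icc a s, HasDerivWithinAt (φ · s x) (φt τ s x) (Icc a s) τ)
    (hφx : ∀ s ∈ Icc t T, ∀ y ∈ V, HasDerivAt (φ t s ·) (φx t s y) y)
    (hφxx : ∀ s ∈ Icc t T, ∀ y ∈ V, HasDerivAt (φx t s ·) (φxx t s y) y)
    (hψt : HasDerivWithinAt (ψ · x) (ψt t x) (Icc a T) t)
    (hψx : ∀ y ∈ V, HasDerivAt (ψ t ·) (ψx t y) y)
    (hψxx : HasDerivAt (ψx t ·) (ψxx t x) x)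
    (hφpde : ∀ s ∈ Ioc t T,
      φt t s x + D * φx t s x + A * φxx t s x + c * φ t s x + c' * φ' t s x = 0)
    (hψpde : ψt t x + D * ψx t x + A * ψxx t x + c * ψ t x + c' * ψ' t x = 0) :
    derivWithin (discountedValue T ρ φ ψ · x) (Icc a T) t
      + D * deriv (discountedValue T ρ φ ψ t ·) x
      + A * deriv (deriv (discountedValue T ρ φ ψ t ·)) x
      + φ t t x + c * discountedValue T ρ φ ψ t x - ρ * discountedValue T ρ φ ψ t x
      + c' * discountedValue T ρ φ' ψ' t x = 0 := by
  have htT : t ∈ Icc a T := Ico_subset_Icc_self ht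
  rw [← uIcc_of_le htT.2] at hφx hφxx
  have hdt : derivWithin (discountedValue T ρ φ ψ · x) (Icc a T) t
      = ρ * discountedValue T ρ φ ψ t x + discountedValue T ρ φt ψt t x - φ t t x :=
    (hasDerivWithinAt_discountedValue_fst htT (hφc.triangle_of_triangleProd hx)
      (hφtc.triangle_of_triangleProd hx) hφt hψt).derivWithin
      (uniqueDiffOn_Icc (ht.1.trans_lt ht.2) t htT)
  have hdx : ∀ y ∈ V, HasDerivAt (discountedValue T ρ φ ψ t ·)
      (discountedValue T ρ φx ψx t y) y := fun y hy =>
    hasDerivAt_discountedValue_snd hV hy (hφc.uIcc_prod_of_triangleProd htT)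
      (hφxc.uIcc_prod_of_triangleProd htT) hφx (hψx y hy)
  have hdxx : deriv (deriv (discountedValue T ρ φ ψ t ·)) x
      = discountedValue T ρ φxx ψxx t x := by
    have heq : deriv (discountedValue T ρ φ ψ t ·) =ᶠ[𝓝 x] (discountedValue T ρ φx ψx t ·) :=
      eventually_of_mem (hV.mem_nhds hx) fun y hy => (hdx y hy).deriv
    rw [heq.deriv_eq]
    exact (hasDerivAt_discountedValue_snd hV hx (hφxc.uIcc_prod_of_triangleProd htT)
      (hφxxc.uIcc_prod_of_triangleProd htT) hφxx hψxx).deriv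
  have hint : ∀ {χ : ℝ → ℝ → ℝ → ℝ},
      ContinuousOn (fun p : ℝ × ℝ × ℝ => χ p.1 p.2.1 p.2.2) (triangleProd a T V) →
      IntervalIntegrable (χ t · x) volume t T := fun hχ =>
    ((hχ.uIcc_prod_of_triangleProd htT).comp (f := fun s => (s, x)) (by fun_prop)
      fun s hs => ⟨hs, hx⟩).intervalIntegrable
  have hgen : discountedValue T ρ (φt + D • φx + A • φxx + c • φ + c' • φ')
      (ψt + D • ψx + A • ψxx + c • ψ + c' • ψ') t x = 0 :=
    discountedValue_eq_zero htT.2 hφpde hψpde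
  have I₁ := hint hφtc
  have I₂ := I₁.add ((hint hφxc).const_mul D)
  have I₃ := I₂.add ((hint hφxxc).const_mul A)
  have I₄ := I₃.add ((hint hφc).const_mul c)
  rw [discountedValue_add I₄ ((hint hφ'c).const_mul c'),
    discountedValue_add I₃ ((hint hφc).const_mul c),
    discountedValue_add I₂ ((hint hφxxc).const_mul A),
    discountedValue_add I₁ ((hint hφxc).const_mul D),
    discountedValue_smul, discountedValue_smul, discountedValue_smul, discountedValue_smul] at hgen
  rw [hdt, (hdx x hx).deriv, hdxx]
  linear_combination hgen

theorem stmt_11_general (T : ℝ) (r μ σ : ℝ → Fin 2 → ℝ)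
    (ρ : Fin 2 → ℝ)
    (lam : Fin 2 → ℝ)
    (U : ℝ → ℝ)
    (F₁ F₂ : ℝ → ℝ → Fin 2 → ℝ)
    (f f_t f_x f_xx : ℝ → ℝ → ℝ → Fin 2 → ℝ)
    (h h_t h_x h_xx : ℝ → ℝ → Fin 2 → ℝ)
    -- continuity of f and of its partial derivatives on {0 ≤ t ≤ s ≤ T} × (0,∞)
    (hfc : ∀ i, ContinuousOn (fun p : ℝ × ℝ × ℝ => f p.1 p.2.1 p.2.2 i)
      {p : ℝ × ℝ × ℝ | 0 ≤ p.1 ∧ p.1 ≤ p.2.1 ∧ p.2.1 ≤ T ∧ 0 < p.2.2})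
    (hftc : ∀ i, ContinuousOn (fun p : ℝ × ℝ × ℝ => f_t p.1 p.2.1 p.2.2 i)
      {p : ℝ × ℝ × ℝ | 0 ≤ p.1 ∧ p.1 ≤ p.2.1 ∧ p.2.1 ≤ T ∧ 0 < p.2.2})
    (hfxc : ∀ i, ContinuousOn (fun p : ℝ × ℝ × ℝ => f_x p.1 p.2.1 p.2.2 i)
      {p : ℝ × ℝ × ℝ | 0 ≤ p.1 ∧ p.1 ≤ p.2.1 ∧ p.2.1 ≤ T ∧ 0 < p.2.2})
    (hfxxc : ∀ i, ContinuousOn (fun p : ℝ × ℝ × ℝ => f_xx p.1 p.2.1 p.2.2 i)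
      {p : ℝ × ℝ × ℝ | 0 ≤ p.1 ∧ p.1 ≤ p.2.1 ∧ p.2.1 ≤ T ∧ 0 < p.2.2})
    -- partial derivatives of f
    (hft : ∀ i : Fin 2, ∀ x ∈ Set.Ioi (0 : ℝ), ∀ s ∈ Set.Icc (0 : ℝ) T, ∀ t ∈ Set.Icc 0 s,
      HasDerivWithinAt (fun τ => f τ s x i) (f_t t s x i) (Set.Icc 0 s) t)
    (hfx : ∀ i : Fin 2, ∀ t s : ℝ, 0 ≤ t → t ≤ s → s ≤ T → ∀ x ∈ Set.Ioi (0 : ℝ),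
      HasDerivAt (fun y => f t s y i) (f_x t s x i) x)
    (hfxx : ∀ i : Fin 2, ∀ t s : ℝ, 0 ≤ t → t ≤ s → s ≤ T → ∀ x ∈ Set.Ioi (0 : ℝ),
      HasDerivAt (fun y => f_x t s y i) (f_xx t s x i) x)
    -- the PDE (0PDEf) for f, for t < s, with boundary value f(t,t,x,i) = U(F₂(t,x,i))
    (hfpde : ∀ i : Fin 2, ∀ t s x : ℝ, 0 ≤ t → t < s → s ≤ T → 0 < x →
      f_t t s x i + (r t i * x + μ t i * F₁ t x i - F₂ t x i) * f_x t s x i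
        + σ t i ^ 2 * F₁ t x i ^ 2 / 2 * f_xx t s x i
        + (-lam i) * f t s x i + lam i * f t s x (1 - i) = 0)
    (hfbd : ∀ i : Fin 2, ∀ t x : ℝ, 0 ≤ t → t ≤ T → 0 < x → f t t x i = U (F₂ t x i))
    -- partial derivatives of h
    (hht : ∀ i : Fin 2, ∀ x ∈ Set.Ioi (0 : ℝ), ∀ t ∈ Set.Icc (0 : ℝ) T,
      HasDerivWithinAt (fun τ => h τ x i) (h_t t x i) (Set.Icc 0 T) t)
    (hhx : ∀ i : Fin 2, ∀ t ∈ Set.Icc (0 : ℝ) T, ∀ x ∈ Set.Ioi (0 : ℝ),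
      HasDerivAt (fun y => h t y i) (h_x t x i) x)
    (hhxx : ∀ i : Fin 2, ∀ t ∈ Set.Icc (0 : ℝ) T, ∀ x ∈ Set.Ioi (0 : ℝ),
      HasDerivAt (fun y => h_x t y i) (h_xx t x i) x)
    -- the PDE (0PDE1) for h, with terminal value h(T,x,i) = U(x)
    (hhpde : ∀ i : Fin 2, ∀ t x : ℝ, 0 ≤ t → t ≤ T → 0 < x →
      h_t t x i + (r t i * x + μ t i * F₁ t x i - F₂ t x i) * h_x t x i
        + σ t i ^ 2 * F₁ t x i ^ 2 / 2 * h_xx t x i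
        + (-lam i) * h t x i + lam i * h t x (1 - i) = 0)
    (hhbd : ∀ i : Fin 2, ∀ x : ℝ, 0 < x → h T x i = U x) :
    -- the value function v and its companion v̄
    let v : ℝ → ℝ → Fin 2 → ℝ := fun t x i =>
      (∫ s in t..T, Real.exp (-ρ i * (s - t)) * f t s x i)
        + Real.exp (-ρ i * (T - t)) * h t x i
    let vb : ℝ → ℝ → Fin 2 → ℝ := fun t x i =>
      (∫ s in t..T, Real.exp (-ρ (1 - i) * (s - t)) * f t s x i)
        + Real.exp (-ρ (1 - i) * (T - t)) * h t x i
    (∀ i : Fin 2, ∀ t ∈ Set.Ico (0 : ℝ) T, ∀ x ∈ Set.Ioi (0 : ℝ),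
      derivWithin (fun τ => v τ x i) (Set.Icc 0 T) t
          + (r t i * x + μ t i * F₁ t x i - F₂ t x i) * deriv (fun y => v t y i) x
          + σ t i ^ 2 * F₁ t x i ^ 2 / 2 * deriv (deriv (fun y => v t y i)) x
          + U (F₂ t x i) + (-lam i) * v t x i - ρ i * v t x i
          + lam i * vb t x (1 - i) = 0 ∧
      derivWithin (fun τ => vb τ x i) (Set.Icc 0 T) t
          + (r t i * x + μ t i * F₁ t x i - F₂ t x i) * deriv (fun y => vb t y i) x
          + σ t i ^ 2 * F₁ t x i ^ 2 / 2 * deriv (deriv (fun y => vb t y i)) x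
          + U (F₂ t x i) + (-lam i) * vb t x i - ρ (1 - i) * vb t x i
          + lam i * v t x (1 - i) = 0) ∧
    (∀ i : Fin 2, ∀ x : ℝ, 0 < x → v T x i = U x ∧ vb T x i = U x) := by
  intro v vb
  have h2i : ∀ k : Fin 2, 1 - (1 - k) = k := by decide
  have hjb := fun (ρ' : ℝ) (i : Fin 2) (t : ℝ) (ht : t ∈ Set.Ico 0 T) (x : ℝ)
      (hx : x ∈ Set.Ioi 0) =>
    have htT : t ∈ Set.Icc 0 T := Set.Ico_subset_Icc_self ht
    discountedValue_hjb (ρ := ρ') (V := Set.Ioi 0)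
      (φ := fun t s x => f t s x i) (φt := fun t s x => f_t t s x i)
      (φx := fun t s x => f_x t s x i) (φxx := fun t s x => f_xx t s x i)
      (φ' := fun t s x => f t s x (1 - i))
      (ψ := fun t x => h t x i) (ψt := fun t x => h_t t x i)
      (ψx := fun t x => h_x t x i) (ψxx := fun t x => h_xx t x i)
      (ψ' := fun t x => h t x (1 - i)) ht isOpen_Ioi hx
      (hfc i) (hftc i) (hfxc i) (hfxxc i) (hfc (1 - i)) (hft i x hx)
      (fun s hs y hy => hfx i t s ht.1 hs.1 hs.2 y hy)
      (fun s hs y hy => hfxx i t s ht.1 hs.1 hs.2 y hy)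
      (hht i x hx t htT) (hhx i t htT) (hhxx i t htT x hx)
      (fun s hs => hfpde i t s x ht.1 hs.1 hs.2 hx) (hhpde i t x ht.1 htT.2 hx)
  refine ⟨fun i t ht x hx => ⟨?_, ?_⟩, fun i x hx => ⟨?_, ?_⟩⟩
  · simpa only [v, vb, discountedValue, h2i, hfbd i t x ht.1 ht.2.le hx]
      using hjb (ρ i) i t ht x hx
  · simpa only [v, vb, discountedValue, hfbd i t x ht.1 ht.2.le hx]
      using hjb (ρ (1 - i)) i t ht x hx
  · simpa [v] using hhbd i x hx
  · simpa [vb] using hhbd i x hx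

/-- Forward direction of Lemma 3.1 of the paper: if `f(t,s,x,i)` and `h(t,x,i)` solve the
auxiliary linear parabolic equations (0PDEf) and (0PDE1) associated with the feedback
strategy `(F₁,F₂)` (regime set `{0,1}`, `j = 1 − i`, `λ_{ij} = lam i`, `λ_{ii} = −lam i`),
then `v(t,x,i) = ∫_t^T e^{−ρ_i(s−t)} f(t,s,x,i) ds + e^{−ρ_i(T−t)} h(t,x,i)` and its
companion `v̄` (with `ρ_i` replaced by `ρ_j`) solve the extended HJB system
(zhang)–(zhang1), with boundary conditions `v(T,x,i) = v̄(T,x,i) = U(x)`.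
The data `f_t, f_x, f_xx` (resp. `h_t, h_x, h_xx`) are the partial derivatives of `f`
(resp. `h`), assumed to exist and be continuous on the corresponding domains. -/
theorem stmt_11 (T : ℝ) (hT : 0 < T)
    (r μ σ : ℝ → Fin 2 → ℝ) (hσ : ∀ t i, 0 < σ t i)
    (ρ : Fin 2 → ℝ) (hρ : ∀ i, 0 < ρ i)
    (lam : Fin 2 → ℝ) (hlam : ∀ i, 0 ≤ lam i)
    (U : ℝ → ℝ) (hU : ContinuousOn U (Set.Ioi 0))
    (F₁ F₂ : ℝ → ℝ → Fin 2 → ℝ)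
    (hF₁ : ∀ i, ContinuousOn (fun p : ℝ × ℝ => F₁ p.1 p.2 i) (Set.Icc 0 T ×ˢ Set.Ioi 0))
    (hF₂ : ∀ i, ContinuousOn (fun p : ℝ × ℝ => F₂ p.1 p.2 i) (Set.Icc 0 T ×ˢ Set.Ioi 0))
    (f f_t f_x f_xx : ℝ → ℝ → ℝ → Fin 2 → ℝ)
    (h h_t h_x h_xx : ℝ → ℝ → Fin 2 → ℝ)
    -- continuity of f and of its partial derivatives on {0 ≤ t ≤ s ≤ T} × (0,∞)
    (hfc : ∀ i, ContinuousOn (fun p : ℝ × ℝ × ℝ => f p.1 p.2.1 p.2.2 i)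
      {p : ℝ × ℝ × ℝ | 0 ≤ p.1 ∧ p.1 ≤ p.2.1 ∧ p.2.1 ≤ T ∧ 0 < p.2.2})
    (hftc : ∀ i, ContinuousOn (fun p : ℝ × ℝ × ℝ => f_t p.1 p.2.1 p.2.2 i)
      {p : ℝ × ℝ × ℝ | 0 ≤ p.1 ∧ p.1 ≤ p.2.1 ∧ p.2.1 ≤ T ∧ 0 < p.2.2})
    (hfxc : ∀ i, ContinuousOn (fun p : ℝ × ℝ × ℝ => f_x p.1 p.2.1 p.2.2 i)
      {p : ℝ × ℝ × ℝ | 0 ≤ p.1 ∧ p.1 ≤ p.2.1 ∧ p.2.1 ≤ T ∧ 0 < p.2.2})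
    (hfxxc : ∀ i, ContinuousOn (fun p : ℝ × ℝ × ℝ => f_xx p.1 p.2.1 p.2.2 i)
      {p : ℝ × ℝ × ℝ | 0 ≤ p.1 ∧ p.1 ≤ p.2.1 ∧ p.2.1 ≤ T ∧ 0 < p.2.2})
    -- partial derivatives of f
    (hft : ∀ i : Fin 2, ∀ x ∈ Set.Ioi (0 : ℝ), ∀ s ∈ Set.Icc (0 : ℝ) T, ∀ t ∈ Set.Icc 0 s,
      HasDerivWithinAt (fun τ => f τ s x i) (f_t t s x i) (Set.Icc 0 s) t)
    (hfx : ∀ i : Fin 2, ∀ t s : ℝ, 0 ≤ t → t ≤ s → s ≤ T → ∀ x ∈ Set.Ioi (0 : ℝ),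
      HasDerivAt (fun y => f t s y i) (f_x t s x i) x)
    (hfxx : ∀ i : Fin 2, ∀ t s : ℝ, 0 ≤ t → t ≤ s → s ≤ T → ∀ x ∈ Set.Ioi (0 : ℝ),
      HasDerivAt (fun y => f_x t s y i) (f_xx t s x i) x)
    -- the PDE (0PDEf) for f, for t < s, with boundary value f(t,t,x,i) = U(F₂(t,x,i))
    (hfpde : ∀ i : Fin 2, ∀ t s x : ℝ, 0 ≤ t → t < s → s ≤ T → 0 < x →
      f_t t s x i + (r t i * x + μ t i * F₁ t x i - F₂ t x i) * f_x t s x i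
        + σ t i ^ 2 * F₁ t x i ^ 2 / 2 * f_xx t s x i
        + (-lam i) * f t s x i + lam i * f t s x (1 - i) = 0)
    (hfbd : ∀ i : Fin 2, ∀ t x : ℝ, 0 ≤ t → t ≤ T → 0 < x → f t t x i = U (F₂ t x i))
    -- continuity of h and of its partial derivatives on [0,T] × (0,∞)
    (hhc : ∀ i, ContinuousOn (fun p : ℝ × ℝ => h p.1 p.2 i) (Set.Icc 0 T ×ˢ Set.Ioi 0))
    (hhtc : ∀ i, ContinuousOn (fun p : ℝ × ℝ => h_t p.1 p.2 i) (Set.Icc 0 T ×ˢ Set.Ioi 0))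
    (hhxc : ∀ i, ContinuousOn (fun p : ℝ × ℝ => h_x p.1 p.2 i) (Set.Icc 0 T ×ˢ Set.Ioi 0))
    (hhxxc : ∀ i, ContinuousOn (fun p : ℝ × ℝ => h_xx p.1 p.2 i) (Set.Icc 0 T ×ˢ Set.Ioi 0))
    -- partial derivatives of h
    (hht : ∀ i : Fin 2, ∀ x ∈ Set.Ioi (0 : ℝ), ∀ t ∈ Set.Icc (0 : ℝ) T,
      HasDerivWithinAt (fun τ => h τ x i) (h_t t x i) (Set.Icc 0 T) t)
    (hhx : ∀ i : Fin 2, ∀ t ∈ Set.Icc (0 : ℝ) T, ∀ x ∈ Set.Ioi (0 : ℝ),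
      HasDerivAt (fun y => h t y i) (h_x t x i) x)
    (hhxx : ∀ i : Fin 2, ∀ t ∈ Set.Icc (0 : ℝ) T, ∀ x ∈ Set.Ioi (0 : ℝ),
      HasDerivAt (fun y => h_x t y i) (h_xx t x i) x)
    -- the PDE (0PDE1) for h, with terminal value h(T,x,i) = U(x)
    (hhpde : ∀ i : Fin 2, ∀ t x : ℝ, 0 ≤ t → t ≤ T → 0 < x →
      h_t t x i + (r t i * x + μ t i * F₁ t x i - F₂ t x i) * h_x t x i
        + σ t i ^ 2 * F₁ t x i ^ 2 / 2 * h_xx t x i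
        + (-lam i) * h t x i + lam i * h t x (1 - i) = 0)
    (hhbd : ∀ i : Fin 2, ∀ x : ℝ, 0 < x → h T x i = U x) :
    -- the value function v and its companion v̄
    let v : ℝ → ℝ → Fin 2 → ℝ := fun t x i =>
      (∫ s in t..T, Real.exp (-ρ i * (s - t)) * f t s x i)
        + Real.exp (-ρ i * (T - t)) * h t x i
    let vb : ℝ → ℝ → Fin 2 → ℝ := fun t x i =>
      (∫ s in t..T, Real.exp (-ρ (1 - i) * (s - t)) * f t s x i)
        + Real.exp (-ρ (1 - i) * (T - t)) * h t x i
    (∀ i : Fin 2, ∀ t ∈ Set.Ico (0 : ℝ) T, ∀ x ∈ Set.Ioi (0 : ℝ),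
      derivWithin (fun τ => v τ x i) (Set.Icc 0 T) t
          + (r t i * x + μ t i * F₁ t x i - F₂ t x i) * deriv (fun y => v t y i) x
          + σ t i ^ 2 * F₁ t x i ^ 2 / 2 * deriv (deriv (fun y => v t y i)) x
          + U (F₂ t x i) + (-lam i) * v t x i - ρ i * v t x i
          + lam i * vb t x (1 - i) = 0 ∧
      derivWithin (fun τ => vb τ x i) (Set.Icc 0 T) t
          + (r t i * x + μ t i * F₁ t x i - F₂ t x i) * deriv (fun y => vb t y i) x
          + σ t i ^ 2 * F₁ t x i ^ 2 / 2 * deriv (deriv (fun y => vb t y i)) x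
          + U (F₂ t x i) + (-lam i) * vb t x i - ρ (1 - i) * vb t x i
          + lam i * v t x (1 - i) = 0) ∧
    (∀ i : Fin 2, ∀ x : ℝ, 0 < x → v T x i = U x ∧ vb T x i = U x) :=
  stmt_11_general T r μ σ ρ lam U F₁ F₂ f f_t f_x f_xx h h_t h_x h_xx hfc hftc hfxc hfxxc hft hfx
    hfxx hfpde hfbd hht hhx hhxx hhpde hhbd
end

section
/- Let g, ḡ : [0,T] × {0,1} → ℝ be continuously differentiable, strictly positive functions solving, for every i ∈ {0,1}, j = 1−i, t ∈ [0,T]: g'(t,i) + (β(t,i) − ρ_i + λ_{ii})·g(t,i) + (1−γ)·g(t,i)^{γ/(γ−1)} + λ_{ij}·ḡ(t,j) = 0 and ḡ'(t,i) + (β(t,i) − ρ_j + λ_{ii})·ḡ(t,i) + (1−γ)·g(t,i)^{1/(γ−1)}·ḡ(t,i) + λ_{ij}·g(t,j) = 0, with g(T,i) = ḡ(T,i) = 1. Define α(t,i) = ρ_i − β(t,i) − λ_{ii} and ᾱ(t,i) = ρ_j − β(t,i) − λ_{ii}. Then for all t ∈ [0,T] and i ∈ {0,1}: g(t,i) ≥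 exp(−∫_t^T α(s,i) ds) and ḡ(t,i) ≥ exp(−∫_t^T ᾱ(s,i) ds); in particular g and ḡ are bounded below on [0,T] × {0,1} by a strictly positive constant. -/
open Set Real intervalIntegral MeasureTheory

theorem continuousOn_betaFn {γ : ℝ} (hγ : γ ≠ 1) {r μ σ : ℝ → Fin 2 → ℝ} {s : Set ℝ} {i : Fin 2}
    (hr : ContinuousOn (fun t => r t i) s) (hμ : ContinuousOn (fun t => μ t i) s)
    (hσc : ContinuousOn (fun t => σ t i) s) (hσ : ∀ t ∈ s, σ t i ≠ 0) :
    ContinuousOn (fun t => betaFn γ r μ σ t i) s := by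
  have h1γ : 1 - γ ≠ 0 := sub_ne_zero.2 hγ.symm
  refine (continuousOn_const.mul hr).add ((continuousOn_const.mul (hμ.pow 2)).div
    ((continuousOn_const.mul (hσc.pow 2)).mul continuousOn_const) fun t ht => ?_)
  have := hσ t ht
  positivity

theorem mul_exp_neg_integral_le_of_hasDerivWithinAt_le_mul {a b : ℝ} {f F F' : ℝ → ℝ}
    (hf : ContinuousOn f (Icc a b))
    (hF : ∀ t ∈ Icc a b, HasDerivWithinAt F (F' t) (Icc a b) t)
    (hle : ∀ t ∈ Icc a b, F' t ≤ f t * F t) {t : ℝ} (ht : t ∈ Icc a b) :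
    F b * exp (-∫ s in t..b, f s) ≤ F t := by
  set I : ℝ → ℝ := fun u => ∫ s in u..b, f s
  have hI : ∀ u ∈ Icc a b, HasDerivWithinAt I (-f u) (Icc a b) u := fun u hu => by
    have : Fact (u ∈ Icc a b) := ⟨hu⟩
    refine integral_hasDerivWithinAt_left ?_
      (hf.stronglyMeasurableAtFilter_nhdsWithin measurableSet_Icc u) (hf u hu)
    exact (hf.mono (Icc_subset_Icc_left hu.1)).intervalIntegrable_of_Icc hu.2
  have hG : ∀ u ∈ Icc a b, HasDerivWithinAt (fun u => F u * exp (I u))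
      ((F' u - f u * F u) * exp (I u)) (Icc a b) u := fun u hu =>
    ((hF u hu).mul (hI u hu).exp).congr_deriv (by ring)
  have hanti : AntitoneOn (fun u => F u * exp (I u)) (Icc a b) := by
    refine antitoneOn_of_hasDerivWithinAt_nonpos (convex_Icc a b)
      (fun u hu => (hG u hu).continuousWithinAt)
      (fun u hu => (hG u (interior_subset hu)).mono interior_subset) fun u hu => ?_
    have := hle u (interior_subset hu)
    exact mul_nonpos_of_nonpos_of_nonneg (by linarith) (exp_pos _).le
  have hbt := hanti ht (right_mem_Icc.2 (ht.1.trans ht.2)) ht.2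
  simp only [I, integral_same, exp_zero, mul_one] at hbt
  calc F b * exp (-I t) ≤ F t * exp (I t) * exp (-I t) := by gcongr
    _ = F t := by rw [mul_assoc, ← exp_add, add_neg_cancel, exp_zero, mul_one]

theorem exists_pos_le_exp_neg_integral {ι : Type*} [Fintype ι] {a b : ℝ} {f : ι → ℝ → ℝ}
    (hf : ∀ k, ContinuousOn (f k) (Icc a b)) :
    ∃ m, 0 < m ∧ ∀ k, ∀ t ∈ Icc a b, m ≤ exp (-∫ s in t..b, f k s) := by
  refine ⟨exp (-∑ k, ∫ s in a..b, |f k s|), exp_pos _,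
    fun k t ht => exp_le_exp.2 (neg_le_neg ?_)⟩
  have hab : a ≤ b := ht.1.trans ht.2
  have habs : ∀ k, IntervalIntegrable (fun s => |f k s|) volume a b := fun k =>
    (hf k).abs.intervalIntegrable_of_Icc hab
  have hIcc : Icc t b ⊆ Icc a b := Icc_subset_Icc_left ht.1
  calc ∫ s in t..b, f k s ≤ ∫ s in t..b, |f k s| :=
        integral_mono_on ht.2 (((hf k).mono hIcc).intervalIntegrable_of_Icc ht.2)
          ((habs k).mono_set (by rwa [uIcc_of_le ht.2, uIcc_of_le hab]))
          fun s _ => le_abs_self _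
    _ ≤ ∫ s in a..b, |f k s| :=
        integral_mono_interval ht.1 ht.2 le_rfl
          (Filter.Eventually.of_forall fun s => abs_nonneg _) (habs k)
    _ ≤ ∑ k, ∫ s in a..b, |f k s| :=
        Finset.single_le_sum (fun k _ => integral_nonneg hab fun s _ => abs_nonneg _)
          (Finset.mem_univ k)

theorem stmt_13_general (T γ : ℝ) (hγ : γ < 1)
    (r μ σ : ℝ → Fin 2 → ℝ)
    (hr : ∀ i, ContinuousOn (fun t => r t i) (Set.Icc 0 T))
    (hμ : ∀ i, ContinuousOn (fun t => μ t i) (Set.Icc 0 T))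
    (hσc : ∀ i, ContinuousOn (fun t => σ t i) (Set.Icc 0 T))
    (hσ : ∀ t i, 0 < σ t i)
    (ρ : Fin 2 → ℝ)
    (lam : Fin 2 → ℝ) (hlam : ∀ i, 0 ≤ lam i)
    (g gb g' gb' : ℝ → Fin 2 → ℝ)
    (hgpos : ∀ i : Fin 2, ∀ t ∈ Set.Icc 0 T, 0 < g t i)
    (hgbpos : ∀ i : Fin 2, ∀ t ∈ Set.Icc 0 T, 0 < gb t i)
    (hgdiff : ∀ i : Fin 2, ∀ t ∈ Set.Icc 0 T,
      HasDerivWithinAt (fun s => g s i) (g' t i) (Set.Icc 0 T) t)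
    (hgbdiff : ∀ i : Fin 2, ∀ t ∈ Set.Icc 0 T,
      HasDerivWithinAt (fun s => gb s i) (gb' t i) (Set.Icc 0 T) t)
    (heq1 : ∀ i : Fin 2, ∀ t ∈ Set.Icc 0 T,
      g' t i + (betaFn γ r μ σ t i - ρ i - lam i) * g t i
        + (1 - γ) * g t i ^ (γ / (γ - 1)) + lam i * gb t (1 - i) = 0)
    (heq2 : ∀ i : Fin 2, ∀ t ∈ Set.Icc 0 T,
      gb' t i + (betaFn γ r μ σ t i - ρ (1 - i) - lam i) * gb t i
        + (1 - γ) * g t i ^ (1 / (γ - 1)) * gb t i + lam i * g t (1 - i) = 0)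
    (hterm : ∀ i : Fin 2, g T i = 1 ∧ gb T i = 1) :
    (∀ i : Fin 2, ∀ t ∈ Set.Icc 0 T,
      Real.exp (-∫ s in t..T, (ρ i - betaFn γ r μ σ s i + lam i)) ≤ g t i ∧
      Real.exp (-∫ s in t..T, (ρ (1 - i) - betaFn γ r μ σ s i + lam i)) ≤ gb t i) ∧
    ∃ m : ℝ, 0 < m ∧ ∀ i : Fin 2, ∀ t ∈ Set.Icc 0 T, m ≤ g t i ∧ m ≤ gb t i := by
  have h1γ : 0 < 1 - γ := sub_pos.2 hγ
  set α : Fin 2 → ℝ → ℝ := fun i s => ρ i - betaFn γ r μ σ s i + lam i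
  set αb : Fin 2 → ℝ → ℝ := fun i s => ρ (1 - i) - betaFn γ r μ σ s i + lam i
  have hβ i := continuousOn_betaFn hγ.ne (hr i) (hμ i) (hσc i) fun t _ => (hσ t i).ne'
  have hα i : ContinuousOn (α i) (Icc 0 T) :=
    (continuousOn_const.sub (hβ i)).add continuousOn_const
  have hαb i : ContinuousOn (αb i) (Icc 0 T) :=
    (continuousOn_const.sub (hβ i)).add continuousOn_const
  have hg i t (ht : t ∈ Icc 0 T) : g' t i ≤ α i t * g t i := by
    have := mul_pos h1γ (rpow_pos_of_pos (hgpos i t ht) (γ / (γ - 1)))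
    have := mul_nonneg (hlam i) (hgbpos (1 - i) t ht).le
    linarith [heq1 i t ht]
  have hgb i t (ht : t ∈ Icc 0 T) : gb' t i ≤ αb i t * gb t i := by
    have := mul_pos (mul_pos h1γ (rpow_pos_of_pos (hgpos i t ht) (1 / (γ - 1)))) (hgbpos i t ht)
    have := mul_nonneg (hlam i) (hgpos (1 - i) t ht).le
    linarith [heq2 i t ht]
  have hbounds i t (ht : t ∈ Icc 0 T) :
      exp (-∫ s in t..T, α i s) ≤ g t i ∧ exp (-∫ s in t..T, αb i s) ≤ gb t i := by
    have h := mul_exp_neg_integral_le_of_hasDerivWithinAt_le_mul (hα i) (hgdiff i) (hg i) ht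
    have hb := mul_exp_neg_integral_le_of_hasDerivWithinAt_le_mul (hαb i) (hgbdiff i) (hgb i) ht
    rw [(hterm i).1, one_mul] at h
    rw [(hterm i).2, one_mul] at hb
    exact ⟨h, hb⟩
  obtain ⟨m, hm, hmle⟩ := exists_pos_le_exp_neg_integral (f := Sum.elim α αb)
    (Sum.forall.2 ⟨hα, hαb⟩)
  exact ⟨hbounds, m, hm, fun i t ht => ⟨(hmle (.inl i) t ht).trans (hbounds i t ht).1,
    (hmle (.inr i) t ht).trans (hbounds i t ht).2⟩⟩

/-- Lower bound for the subgame perfect ODE system (appendix, first step of the proof of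
Lemma 4.1): if `(g, ḡ)` is a strictly positive continuously differentiable solution of the
system with terminal value `1` (regime set `{0,1}`, `j = 1 − i`, `λ_{ij} = lam i`,
`λ_{ii} = −lam i`), and `α(t,i) = ρ_i − β(t,i) − λ_{ii}`,
`ᾱ(t,i) = ρ_j − β(t,i) − λ_{ii}`, then `g(t,i) ≥ exp(−∫_t^T α(s,i) ds)` and
`ḡ(t,i) ≥ exp(−∫_t^T ᾱ(s,i) ds)`; in particular `g, ḡ` are bounded below by a strictly
positive constant. -/
theorem stmt_13 (T γ : ℝ) (hT : 0 < T) (hγ : γ < 1) (hγ0 : γ ≠ 0)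
    (r μ σ : ℝ → Fin 2 → ℝ)
    (hr : ∀ i, ContinuousOn (fun t => r t i) (Set.Icc 0 T))
    (hμ : ∀ i, ContinuousOn (fun t => μ t i) (Set.Icc 0 T))
    (hσc : ∀ i, ContinuousOn (fun t => σ t i) (Set.Icc 0 T))
    (hσ : ∀ t i, 0 < σ t i)
    (ρ : Fin 2 → ℝ) (hρ : ∀ i, 0 < ρ i)
    (lam : Fin 2 → ℝ) (hlam : ∀ i, 0 ≤ lam i)
    (g gb g' gb' : ℝ → Fin 2 → ℝ)
    (hgpos : ∀ i : Fin 2, ∀ t ∈ Set.Icc 0 T, 0 < g t i)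
    (hgbpos : ∀ i : Fin 2, ∀ t ∈ Set.Icc 0 T, 0 < gb t i)
    (hgdiff : ∀ i : Fin 2, ∀ t ∈ Set.Icc 0 T,
      HasDerivWithinAt (fun s => g s i) (g' t i) (Set.Icc 0 T) t)
    (hgbdiff : ∀ i : Fin 2, ∀ t ∈ Set.Icc 0 T,
      HasDerivWithinAt (fun s => gb s i) (gb' t i) (Set.Icc 0 T) t)
    (hgcont : ∀ i : Fin 2, ContinuousOn (fun t => g' t i) (Set.Icc 0 T))
    (hgbcont : ∀ i : Fin 2, ContinuousOn (fun t => gb' t i) (Set.Icc 0 T))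
    (heq1 : ∀ i : Fin 2, ∀ t ∈ Set.Icc 0 T,
      g' t i + (betaFn γ r μ σ t i - ρ i - lam i) * g t i
        + (1 - γ) * g t i ^ (γ / (γ - 1)) + lam i * gb t (1 - i) = 0)
    (heq2 : ∀ i : Fin 2, ∀ t ∈ Set.Icc 0 T,
      gb' t i + (betaFn γ r μ σ t i - ρ (1 - i) - lam i) * gb t i
        + (1 - γ) * g t i ^ (1 / (γ - 1)) * gb t i + lam i * g t (1 - i) = 0)
    (hterm : ∀ i : Fin 2, g T i = 1 ∧ gb T i = 1) :
    (∀ i : Fin 2, ∀ t ∈ Set.Icc 0 T,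
      Real.exp (-∫ s in t..T, (ρ i - betaFn γ r μ σ s i + lam i)) ≤ g t i ∧
      Real.exp (-∫ s in t..T, (ρ (1 - i) - betaFn γ r μ σ s i + lam i)) ≤ gb t i) ∧
    ∃ m : ℝ, 0 < m ∧ ∀ i : Fin 2, ∀ t ∈ Set.Icc 0 T, m ≤ g t i ∧ m ≤ gb t i :=
  stmt_13_general T γ hγ r μ σ hr hμ hσc hσ ρ lam hlam g gb g' gb' hgpos hgbpos hgdiff hgbdiff heq1
    heq2 hterm
end
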